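/- arXiv:1005.0455 — 6 statements merged into one kernel-verified Lean document; each statement's English description precedes it below -/
import Mathlib

section
/- Let f:[a,b]→ℝ be differentiable on (a,b) with |f'(t)| ≤ M for all t ∈ (a,b). Then for all x ∈ [a,b], |f(x) - (1/(b-a))∫_a^b f(t)dt| ≤ [1/4 + (x-(a+b)/2)²/(b-a)²](b-a)M. -/
/-! By the mean value theorem `|f x - f t| ≤ M |x - t|` on `[a, b]`, and `(b - a) f x - ∫ f` is the
integral of `f x - f t`. Hence it is at most `M ∫ |x - t| = M ((x - a)² + (b - x)²) / 2`, and
`((x - a)² + (b - x)²) / 2 = (b - a)² / 4 + (x - (a + b) / 2)²`. -/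

open Set MeasureTheory intervalIntegral

theorem abs_sub_le_mul_of_hasDerivAt {f f' : ℝ → ℝ} {a b M : ℝ}
    (hfc : ContinuousOn f (Icc a b)) (hfd : ∀ t ∈ Ioo a b, HasDerivAt f (f' t) t)
    (hM : ∀ t ∈ Ioo a b, |f' t| ≤ M) {u v : ℝ} (hu : u ∈ Icc a b) (hv : v ∈ Icc a b) :
    |f u - f v| ≤ M * |u - v| := by
  wlog huv : u < v generalizing u v
  · rcases (not_lt.1 huv).eq_or_lt with rfl | hvu
    · simp
    · rw [abs_sub_comm, abs_sub_comm u]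
      exact this hv hu hvu
  obtain ⟨c, hc, hslope⟩ := exists_hasDerivAt_eq_slope f f' huv
    (hfc.mono (Icc_subset_Icc hu.1 hv.2)) fun t ht => hfd t (Ioo_subset_Ioo hu.1 hv.2 ht)
  have hpos : 0 < |u - v| := abs_pos.2 (sub_ne_zero.2 huv.ne)
  calc |f u - f v| = |f' c| * |u - v| := by
        rw [hslope, abs_div, abs_sub_comm (f v), abs_sub_comm v, div_mul_cancel₀ _ hpos.ne']
    _ ≤ M * |u - v| := by gcongr; exact hM c (Ioo_subset_Ioo hu.1 hv.2 hc)

theorem integral_abs_sub_of_mem_Icc {a b x : ℝ} (hx : x ∈ Icc a b) :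
    ∫ t in a..b, |x - t| = ((x - a) ^ 2 + (b - x) ^ 2) / 2 := by
  have hcont : Continuous fun t : ℝ => |x - t| := by fun_prop
  have left : ∫ t in a..x, |x - t| = (x - a) ^ 2 / 2 := by
    rw [integral_congr (g := fun t => x - t) fun t ht => abs_of_nonneg <| by
      rw [uIcc_of_le hx.1] at ht; linarith [ht.2]]
    simp [integral_comp_sub_left (fun t => t)]
  have right : ∫ t in x..b, |x - t| = (b - x) ^ 2 / 2 := by
    rw [integral_congr (g := fun t => t - x) fun t ht =>
      (abs_sub_comm x t).trans <| abs_of_nonneg <| by rw [uIcc_of_le hx.2] at ht; linarith [ht.1]]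
    simp [integral_comp_sub_right (fun t => t)]
  rw [← integral_add_adjacent_intervals (hcont.intervalIntegrable a x)
    (hcont.intervalIntegrable x b), left, right, add_div]

theorem abs_mul_sub_integral_le_of_abs_sub_le {f : ℝ → ℝ} {a b x M : ℝ}
    (hf : IntervalIntegrable f volume a b) (hx : x ∈ Icc a b) (hlip : ∀ t ∈ Icc a b, |f x - f t| ≤ M * |x - t|) :
    |(b - a) * f x - ∫ t in a..b, f t| ≤ ((x - a) ^ 2 + (b - x) ^ 2) / 2 * M := by
  have hab : a ≤ b := hx.1.trans hx.2
  have hbound : IntervalIntegrable (fun t => M * |x - t|) volume a b :=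
    (by fun_prop : Continuous fun t : ℝ => M * |x - t|).intervalIntegrable a b
  calc |(b - a) * f x - ∫ t in a..b, f t| = |∫ t in a..b, (f x - f t)| := by
        rw [integral_sub intervalIntegrable_const hf, intervalIntegral.integral_const, smul_eq_mul]
    _ ≤ ∫ t in a..b, M * |x - t| := by
        rw [← Real.norm_eq_abs]
        exact norm_integral_le_of_norm_le hab (Filter.Eventually.of_forall fun t ht =>
          hlip t (Ioc_subset_Icc_self ht)) hbound
    _ = ((x - a) ^ 2 + (b - x) ^ 2) / 2 * M := by
        rw [intervalIntegral.integral_const_mul, integral_abs_sub_of_mem_Icc hx, mul_comm]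

theorem ostrowski_classical (a b M : ℝ) (hab : a < b) (f f' : ℝ → ℝ)
    (hfc : ContinuousOn f (Icc a b))
    (hfd : ∀ t ∈ Ioo a b, HasDerivAt f (f' t) t)
    (hM : ∀ t ∈ Ioo a b, |f' t| ≤ M) :
    ∀ x ∈ Icc a b,
      |f x - (1 / (b - a)) * ∫ t in a..b, f t| ≤
        (1 / 4 + (x - (a + b) / 2) ^ 2 / (b - a) ^ 2) * (b - a) * M := by
  intro x hx
  have hba : 0 < b - a := sub_pos.2 hab
  have hint : IntervalIntegrable f volume a b := hfc.intervalIntegrable_of_Icc hab.le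
  have hmain := abs_mul_sub_integral_le_of_abs_sub_le hint hx fun t ht =>
    abs_sub_le_mul_of_hasDerivAt hfc hfd hM hx ht
  have hrewrite : f x - 1 / (b - a) * ∫ t in a..b, f t
      = ((b - a) * f x - ∫ t in a..b, f t) / (b - a) := by
    field_simp
  have hconst : (1 / 4 + (x - (a + b) / 2) ^ 2 / (b - a) ^ 2) * (b - a) * M
      = ((x - a) ^ 2 + (b - x) ^ 2) / 2 * M / (b - a) := by
    field_simp
    ring
  rw [hrewrite, hconst, abs_div, abs_of_pos hba]
  gcongr
end

section
/- Let w:[a,b]→[0,∞) be integrable with m(a,b)=∫_a^b w < ∞, and similarly on [c,d] with m(c,d)=∫_c^d w. Let f:[a,b]×[c,d]→ℝ be C² (absolutely continuous with mixed second partial derivative existing). Define p(x,t)=∫_a^t w(u)du for a≤t<x and p(x,t)=∫_b^t w(u)du for x≤t≤b, and q(y,s)=∫_c^s w(u)du for c≤s<y and q(y,s)=∫_d^s w(u)du for y≤s≤d. Then for all (x,y)∈[a,b]×[c,d]: ∫_a^b∫_c^d p(x,t)q(y,s)·∂²f/∂t∂s(t,s) ds dt = m(a,b)m(c,d)f(x,y)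 - m(c,d)∫_a^b w(t)f(t,y)dt - m(a,b)∫_c^d w(s)f(x,s)ds + ∫_a^b∫_c^d w(t)w(s)f(t,s) ds dt. -/
/-!
Write `Δ(t, s) = f x y - f x s - (f t y - f t s)` for the mixed difference of `f` over the
rectangle with corners `(t, s)` and `(x, y)`. In one variable, Montgomery's identity
`∫ p(x, t) F'(t) dt = ∫ w(t) (F x - F t) dt` is integration by parts against the absolutely
continuous primitives `∫_α^t w` and `∫_β^t w` on the two sides of `x`. Applied in `s` to
`F = fx t ·`, then (after Fubini) in `t` to `F = f · y - f · s`, it turns the left-hand side into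
`∫∫ w t * w s * Δ(t, s)`, and expanding `Δ` gives the four terms on the right. The difference
form matters: `fx t y` alone need not be integrable in `t`, but `fx t y - fx t s = ∫_s^y fxy t`
is continuous on the rectangle.
-/

open Set MeasureTheory intervalIntegral Function

noncomputable def montgomeryKernel (w : ℝ → ℝ) (α β x t : ℝ) : ℝ :=
  if t < x then ∫ u in α..t, w u else ∫ u in β..t, w u

section Montgomery

variable {w F : ℝ → ℝ} {α β x : ℝ}

theorem integral_primitive_mul_deriv {c l r : ℝ} (hw : IntervalIntegrable w volume l r)
    (hc : c ∈ uIcc l r) (hF : AbsolutelyContinuousOnInterval F l r) :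
    ∫ t in l..r, (∫ u in c..t, w u) * deriv F t =
      (∫ u in c..r, w u) * F r - (∫ u in c..l, w u) * F l - ∫ t in l..r, w t * F t := by
  rw [(hw.absolutelyContinuousOnInterval_intervalIntegral hc).integral_mul_deriv_eq_deriv_mul hF]
  congr 1
  refine integral_congr_ae ?_
  filter_upwards [hw.ae_hasDerivAt_integral] with t ht htmem
  rw [(ht (uIoc_subset_uIcc htmem) c hc).deriv]

theorem intervalIntegrable_primitive_mul_deriv {c l r : ℝ} (hw : IntervalIntegrable w volume l r)
    (hc : c ∈ uIcc l r) (hF : AbsolutelyContinuousOnInterval F l r) :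
    IntervalIntegrable (fun t => (∫ u in c..t, w u) * deriv F t) volume l r :=
  hF.intervalIntegrable_deriv.continuousOn_mul (continuousOn_primitive_interval' hw hc)

theorem montgomeryKernel_eqOn_Iio :
    EqOn (montgomeryKernel w α β x) (fun t => ∫ u in α..t, w u) (Iio x) :=
  fun _ ht => if_pos ht

theorem montgomeryKernel_eqOn_Ici :
    EqOn (montgomeryKernel w α β x) (fun t => ∫ u in β..t, w u) (Ici x) :=
  fun _ ht => if_neg (not_lt.2 ht)

theorem intervalIntegrable_montgomeryKernel (hx : x ∈ Icc α β)
    (hw : IntervalIntegrable w volume α β) :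
    IntervalIntegrable (montgomeryKernel w α β x) volume α β := by
  have hx' : x ∈ uIcc α β := Icc_subset_uIcc hx
  have hl : IntervalIntegrable (montgomeryKernel w α β x) volume α x :=
    ((continuousOn_primitive_interval' (hw.mono_set (uIcc_subset_uIcc_left hx'))
      left_mem_uIcc).intervalIntegrable).congr_uIoo fun t ht =>
        (montgomeryKernel_eqOn_Iio (uIoo_of_le hx.1 ▸ ht).2).symm
  have hr : IntervalIntegrable (montgomeryKernel w α β x) volume x β :=
    ((continuousOn_primitive_interval' (hw.mono_set (uIcc_subset_uIcc_right hx'))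
      right_mem_uIcc).intervalIntegrable).congr fun t ht =>
        (montgomeryKernel_eqOn_Ici (uIoc_of_le hx.2 ▸ ht).1.le).symm
  exact hl.trans hr

theorem integral_montgomeryKernel_mul_deriv (hx : x ∈ Icc α β)
    (hw : IntervalIntegrable w volume α β) (hF : AbsolutelyContinuousOnInterval F α β) :
    ∫ t in α..β, montgomeryKernel w α β x t * deriv F t =
      (∫ u in α..β, w u) * F x - ∫ t in α..β, w t * F t := by
  have hx' : x ∈ uIcc α β := Icc_subset_uIcc hx
  obtain ⟨hαx, hxβ⟩ := hx
  have hl : uIcc α x ⊆ uIcc α β := uIcc_subset_uIcc_left hx'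
  have hr : uIcc x β ⊆ uIcc α β := uIcc_subset_uIcc_right hx'
  have eq_l : EqOn (fun t => montgomeryKernel w α β x t * deriv F t)
      (fun t => (∫ u in α..t, w u) * deriv F t) (uIoo α x) := fun t ht =>
    congrArg (· * deriv F t) (montgomeryKernel_eqOn_Iio (uIoo_of_le hαx ▸ ht).2)
  have eq_r : EqOn (fun t => montgomeryKernel w α β x t * deriv F t)
      (fun t => (∫ u in β..t, w u) * deriv F t) (uIcc x β) := fun t ht =>
    congrArg (· * deriv F t) (montgomeryKernel_eqOn_Ici (uIcc_of_le hxβ ▸ ht).1)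
  have int_l := intervalIntegrable_primitive_mul_deriv (hw.mono_set hl) left_mem_uIcc (hF.mono hl)
  have int_r := intervalIntegrable_primitive_mul_deriv (hw.mono_set hr) right_mem_uIcc (hF.mono hr)
  have hwF : IntervalIntegrable (fun t => w t * F t) volume α β :=
    hw.mul_continuousOn hF.continuousOn
  rw [← integral_add_adjacent_intervals (int_l.congr_uIoo eq_l.symm)
      (int_r.congr (eq_r.mono uIoc_subset_uIcc).symm),
    integral_congr_uIoo eq_l, integral_congr eq_r,
    integral_primitive_mul_deriv (hw.mono_set hl) left_mem_uIcc (hF.mono hl),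
    integral_primitive_mul_deriv (hw.mono_set hr) right_mem_uIcc (hF.mono hr),
    ← integral_add_adjacent_intervals (hwF.mono_set hl) (hwF.mono_set hr),
    ← integral_add_adjacent_intervals (hw.mono_set hl) (hw.mono_set hr),
    integral_symm x β, integral_same, integral_same]
  ring

theorem absolutelyContinuousOnInterval_of_hasDerivAt {F' : ℝ → ℝ}
    (hF : ∀ t ∈ uIcc α β, HasDerivAt F (F' t) t) (hF' : ContinuousOn F' (uIcc α β)) :
    AbsolutelyContinuousOnInterval F α β := by
  obtain ⟨C, hC⟩ := isCompact_uIcc.exists_bound_of_continuousOn hF'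
  refine LipschitzOnWith.absolutelyContinuousOnInterval (K := C.toNNReal) ?_
  refine (convex_uIcc α β).lipschitzOnWith_of_nnnorm_hasDerivWithin_le
    (fun t ht => (hF t ht).hasDerivWithinAt) fun t ht => ?_
  rw [← NNReal.coe_le_coe, coe_nnnorm]
  exact (hC t ht).trans (Real.le_coe_toNNReal C)

theorem integral_montgomeryKernel_mul_of_hasDerivAt {F' : ℝ → ℝ} (hx : x ∈ Icc α β)
    (hw : IntervalIntegrable w volume α β) (hF : ∀ t ∈ Icc α β, HasDerivAt F (F' t) t)
    (hF' : ContinuousOn F' (Icc α β)) :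
    ∫ t in α..β, montgomeryKernel w α β x t * F' t = ∫ t in α..β, w t * (F x - F t) := by
  rw [← uIcc_of_le (hx.1.trans hx.2)] at hF hF'
  have hAC := absolutelyContinuousOnInterval_of_hasDerivAt hF hF'
  calc ∫ t in α..β, montgomeryKernel w α β x t * F' t
      = ∫ t in α..β, montgomeryKernel w α β x t * deriv F t :=
        integral_congr fun t ht => by rw [(hF t ht).deriv]
    _ = (∫ u in α..β, w u) * F x - ∫ t in α..β, w t * F t :=
        integral_montgomeryKernel_mul_deriv hx hw hAC
    _ = ∫ t in α..β, w t * (F x - F t) := by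
        simp_rw [mul_sub]
        rw [integral_sub (hw.mul_const _) (hw.mul_continuousOn hAC.continuousOn),
          intervalIntegral.integral_mul_const]

end Montgomery

section Rectangle

variable {a b c d : ℝ} {u v : ℝ → ℝ} {G : ℝ → ℝ → ℝ}

theorem integrable_mul_mul_of_continuousOn (hu : IntervalIntegrable u volume a b)
    (hv : IntervalIntegrable v volume c d) (hG : ContinuousOn (uncurry G) (Icc a b ×ˢ Icc c d)) :
    Integrable (fun z : ℝ × ℝ => u z.1 * v z.2 * G z.1 z.2)
      ((volume.restrict (Ioc a b)).prod (volume.restrict (Ioc c d))) := by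
  have hR : Ioc a b ×ˢ Ioc c d ⊆ Icc a b ×ˢ Icc c d :=
    prod_mono Ioc_subset_Icc_self Ioc_subset_Icc_self
  have hRm : MeasurableSet (Ioc a b ×ˢ Ioc c d) := measurableSet_Ioc.prod measurableSet_Ioc
  obtain ⟨C, hC⟩ := (isCompact_Icc.prod isCompact_Icc).exists_bound_of_continuousOn hG
  refine (hu.1.mul_prod hv.1).mul_bdd (c := C) ?_ ?_
  · rw [Measure.prod_restrict, ← Measure.volume_eq_prod]
    exact (hG.mono hR).aestronglyMeasurable hRm
  · rw [Measure.prod_restrict]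
    exact ae_restrict_of_forall_mem hRm fun z hz => hC z (hR hz)

theorem integral_integral_eq_integral_prod (hab : a ≤ b) (hcd : c ≤ d) {F : ℝ → ℝ → ℝ}
    (hF : Integrable (uncurry F) ((volume.restrict (Ioc a b)).prod (volume.restrict (Ioc c d)))) :
    ∫ t in a..b, ∫ s in c..d, F t s =
      ∫ z, F z.1 z.2 ∂(volume.restrict (Ioc a b)).prod (volume.restrict (Ioc c d)) := by
  simp only [integral_of_le hab, integral_of_le hcd]
  exact (integral_prod _ hF).symm

theorem integral_integral_swap_of_continuousOn (hab : a ≤ b) (hcd : c ≤ d)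
    (hu : IntervalIntegrable u volume a b) (hv : IntervalIntegrable v volume c d)
    (hG : ContinuousOn (uncurry G) (Icc a b ×ˢ Icc c d)) :
    ∫ t in a..b, ∫ s in c..d, u t * v s * G t s =
      ∫ s in c..d, ∫ t in a..b, u t * v s * G t s := by
  simp only [integral_of_le hab, integral_of_le hcd]
  exact integral_integral_swap (integrable_mul_mul_of_continuousOn hu hv hG)

theorem continuousOn_mixedDifference {x y : ℝ} (hx : x ∈ Icc a b) (hy : y ∈ Icc c d)
    (hG : ContinuousOn (uncurry G) (Icc a b ×ˢ Icc c d)) :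
    ContinuousOn (uncurry fun t s => G x y - G x s - (G t y - G t s)) (Icc a b ×ˢ Icc c d) :=
  (continuousOn_const.sub (hG.comp (continuousOn_const.prodMk continuousOn_snd)
    fun _ hz => ⟨hx, hz.2⟩)).sub
    ((hG.comp (continuousOn_fst.prodMk continuousOn_const) fun _ hz => ⟨hz.1, hy⟩).sub hG)

theorem integral_integral_mul_mul_mixedDifference {x y : ℝ}
    (hx : x ∈ Icc a b) (hy : y ∈ Icc c d)
    (hu : IntervalIntegrable u volume a b) (hv : IntervalIntegrable v volume c d)
    (hG : ContinuousOn (uncurry G) (Icc a b ×ˢ Icc c d)) :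
    ∫ t in a..b, ∫ s in c..d, u t * v s * (G x y - G x s - (G t y - G t s)) =
      (∫ t in a..b, u t) * (∫ s in c..d, v s) * G x y -
        (∫ s in c..d, v s) * (∫ t in a..b, u t * G t y) -
        (∫ t in a..b, u t) * (∫ s in c..d, v s * G x s) +
        ∫ t in a..b, ∫ s in c..d, u t * v s * G t s := by
  set ρ := (volume.restrict (Ioc a b)).prod (volume.restrict (Ioc c d))
  have hint {H : ℝ → ℝ → ℝ} (hH : ContinuousOn (uncurry H) (Icc a b ×ˢ Icc c d)) :
      Integrable (fun z : ℝ × ℝ => u z.1 * v z.2 * H z.1 z.2) ρ :=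
    integrable_mul_mul_of_continuousOn hu hv hH
  have hprod {H : ℝ → ℝ → ℝ} (hH : ContinuousOn (uncurry H) (Icc a b ×ˢ Icc c d)) :
      ∫ t in a..b, ∫ s in c..d, u t * v s * H t s = ∫ z, u z.1 * v z.2 * H z.1 z.2 ∂ρ :=
    integral_integral_eq_integral_prod (hx.1.trans hx.2) (hy.1.trans hy.2)
      (F := fun t s => u t * v s * H t s) (hint hH)
  have hG₁ : ContinuousOn (uncurry fun _ _ => G x y) (Icc a b ×ˢ Icc c d) := continuousOn_const
  have hG₂ : ContinuousOn (uncurry fun _ s => G x s) (Icc a b ×ˢ Icc c d) :=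
    hG.comp (continuousOn_const.prodMk continuousOn_snd) fun z hz => ⟨hx, hz.2⟩
  have hG₃ : ContinuousOn (uncurry fun t _ => G t y) (Icc a b ×ˢ Icc c d) :=
    hG.comp (continuousOn_fst.prodMk continuousOn_const) fun z hz => ⟨hz.1, hy⟩
  have h₁ := hint hG₁
  have h₂ := hint hG₂
  have h₃ := hint hG₃
  have h₄ := hint hG
  calc ∫ t in a..b, ∫ s in c..d, u t * v s * (G x y - G x s - (G t y - G t s))
      = ∫ z, u z.1 * v z.2 * (G x y - G x z.2 - (G z.1 y - G z.1 z.2)) ∂ρ :=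
        hprod (continuousOn_mixedDifference hx hy hG)
    _ = (∫ z, u z.1 * v z.2 * G x y ∂ρ) - (∫ z, u z.1 * v z.2 * G x z.2 ∂ρ)
          - (∫ z, u z.1 * v z.2 * G z.1 y ∂ρ) + ∫ z, u z.1 * v z.2 * G z.1 z.2 ∂ρ := by
        simp only [mul_sub]
        rw [MeasureTheory.integral_sub, MeasureTheory.integral_sub, MeasureTheory.integral_sub]
        · ring
        all_goals first | assumption | exact h₁.sub h₂ | exact h₃.sub h₄
    _ = _ := by
        rw [← hprod hG₁, ← hprod hG₂, ← hprod hG₃, ← hprod hG]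
        simp only [mul_assoc, mul_left_comm (u _) (∫ _ in c..d, v _),
          intervalIntegral.integral_const_mul, intervalIntegral.integral_mul_const]
        ring

theorem continuousOn_sub_of_hasDerivAt_right {g g' : ℝ → ℝ → ℝ} {y : ℝ} (hab : a ≤ b)
    (hy : y ∈ Icc c d) (hg : ∀ t ∈ Icc a b, ∀ s ∈ Icc c d, HasDerivAt (g t) (g' t s) s)
    (hg' : ContinuousOn (uncurry g') (Icc a b ×ˢ Icc c d)) :
    ContinuousOn (fun p : ℝ × ℝ => g p.1 y - g p.1 p.2) (Icc a b ×ˢ Icc c d) := by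
  have hcd : c ≤ d := hy.1.trans hy.2
  -- clamping to the rectangle gives a continuous extension of `g'` to the whole plane
  set G : ℝ → ℝ → ℝ := fun t v => g' (projIcc a b hab t) (projIcc c d hcd v)
  have hG : Continuous (uncurry G) :=
    hg'.comp_continuous
      (f := fun p : ℝ × ℝ => ((projIcc a b hab p.1 : ℝ), (projIcc c d hcd p.2 : ℝ)))
      (by fun_prop) fun p => ⟨(projIcc a b hab p.1).2, (projIcc c d hcd p.2).2⟩
  have hGg' : ∀ t ∈ Icc a b, ∀ v ∈ Icc c d, G t v = g' t v := fun t ht v hv => by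
    simp only [G, projIcc_of_mem hab ht, projIcc_of_mem hcd hv]
  have hprim : Continuous fun p : ℝ × ℝ => -∫ v in y..p.2, G p.1 v :=
    (continuous_parametric_intervalIntegral_of_continuous (f := fun (p : ℝ × ℝ) v => G p.1 v)
      (hG.comp (continuous_fst.fst.prodMk continuous_snd)) continuous_snd).neg
  refine hprim.continuousOn.congr fun p hp => ?_
  change g p.1 y - g p.1 p.2 = -∫ v in y..p.2, G p.1 v
  rw [← integral_symm, integral_eq_sub_of_hasDerivAt (f := g p.1)]
  · intro v hv
    have hv' : v ∈ Icc c d := uIcc_subset_Icc hp.2 hy hv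
    exact hGg' p.1 hp.1 v hv' ▸ hg p.1 hp.1 v hv'
  · exact (hG.comp (continuous_const.prodMk continuous_id)).intervalIntegrable _ _

end Rectangle

theorem weighted_ostrowski_lemma_general (a b c d : ℝ)
    (w : ℝ → ℝ)
    (hwab : IntervalIntegrable w volume a b)
    (hwcd : IntervalIntegrable w volume c d)
    (f fx fxy : ℝ → ℝ → ℝ)
    (hfc : ContinuousOn (fun p : ℝ × ℝ => f p.1 p.2) (Icc a b ×ˢ Icc c d))
    (hfx : ∀ x ∈ Icc a b, ∀ y ∈ Icc c d, HasDerivAt (fun t => f t y) (fx x y) x)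
    (hfxy : ∀ x ∈ Icc a b, ∀ y ∈ Icc c d, HasDerivAt (fun s => fx x s) (fxy x y) y)
    (hfxyc : ContinuousOn (fun p : ℝ × ℝ => fxy p.1 p.2) (Icc a b ×ˢ Icc c d)) :
    ∀ x ∈ Icc a b, ∀ y ∈ Icc c d,
      (∫ t in a..b, ∫ s in c..d,
          (if t < x then ∫ u in a..t, w u else ∫ u in b..t, w u) *
            (if s < y then ∫ u in c..s, w u else ∫ u in d..s, w u) * fxy t s) =
        (∫ u in a..b, w u) * (∫ u in c..d, w u) * f x y -
          (∫ u in c..d, w u) * (∫ t in a..b, w t * f t y) -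
          (∫ u in a..b, w u) * (∫ s in c..d, w s * f x s) +
          ∫ t in a..b, ∫ s in c..d, w t * w s * f t s := by
  intro x hx y hy
  have hab : a ≤ b := hx.1.trans hx.2
  have hcd : c ≤ d := hy.1.trans hy.2
  have hD : ContinuousOn (fun p : ℝ × ℝ => fx p.1 y - fx p.1 p.2) (Icc a b ×ˢ Icc c d) :=
    continuousOn_sub_of_hasDerivAt_right hab hy hfxy hfxyc
  have montgomery_s : ∀ t ∈ Icc a b, ∫ s in c..d, montgomeryKernel w c d y s * fxy t s =
      ∫ s in c..d, w s * (fx t y - fx t s) := fun t ht =>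
    integral_montgomeryKernel_mul_of_hasDerivAt hy hwcd (hfxy t ht)
      (hfxyc.comp (continuousOn_const.prodMk continuousOn_id) fun s hs => ⟨ht, hs⟩)
  have montgomery_t : ∀ s ∈ Icc c d,
      ∫ t in a..b, montgomeryKernel w a b x t * (fx t y - fx t s) =
        ∫ t in a..b, w t * (f x y - f x s - (f t y - f t s)) := fun s hs =>
    integral_montgomeryKernel_mul_of_hasDerivAt (F := fun t => f t y - f t s) hx hwab
      (fun t ht => (hfx t ht y hy).sub (hfx t ht s hs))
      (hD.comp (continuousOn_id.prodMk continuousOn_const) fun t ht => ⟨ht, hs⟩)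
  calc ∫ t in a..b, ∫ s in c..d,
        montgomeryKernel w a b x t * montgomeryKernel w c d y s * fxy t s
      = ∫ t in a..b, ∫ s in c..d,
          montgomeryKernel w a b x t * w s * (fx t y - fx t s) := by
        refine integral_congr fun t ht => ?_
        simp only [mul_assoc, intervalIntegral.integral_const_mul]
        rw [montgomery_s t (uIcc_of_le hab ▸ ht)]
    _ = ∫ s in c..d, ∫ t in a..b,
          montgomeryKernel w a b x t * w s * (fx t y - fx t s) :=
        integral_integral_swap_of_continuousOn hab hcd
          (intervalIntegrable_montgomeryKernel hx hwab) hwcd hD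
    _ = ∫ s in c..d, ∫ t in a..b, w t * w s * (f x y - f x s - (f t y - f t s)) := by
        refine integral_congr fun s hs => ?_
        simp only [mul_comm _ (w s), mul_assoc, intervalIntegral.integral_const_mul]
        rw [montgomery_t s (uIcc_of_le hcd ▸ hs)]
    _ = ∫ t in a..b, ∫ s in c..d, w t * w s * (f x y - f x s - (f t y - f t s)) :=
        (integral_integral_swap_of_continuousOn hab hcd hwab hwcd
          (continuousOn_mixedDifference hx hy hfc)).symm
    _ = _ := integral_integral_mul_mul_mixedDifference hx hy hwab hwcd hfc

theorem weighted_ostrowski_lemma (a b c d : ℝ) (hab : a < b) (hcd : c < d)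
    (w : ℝ → ℝ) (hw0 : ∀ u ∈ Icc a b ∪ Icc c d, 0 ≤ w u)
    (hwab : IntervalIntegrable w volume a b)
    (hwcd : IntervalIntegrable w volume c d)
    (f fx fxy : ℝ → ℝ → ℝ)
    (hfc : ContinuousOn (fun p : ℝ × ℝ => f p.1 p.2) (Icc a b ×ˢ Icc c d))
    (hfx : ∀ x ∈ Icc a b, ∀ y ∈ Icc c d, HasDerivAt (fun t => f t y) (fx x y) x)
    (hfxy : ∀ x ∈ Icc a b, ∀ y ∈ Icc c d, HasDerivAt (fun s => fx x s) (fxy x y) y)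
    (hfxyc : ContinuousOn (fun p : ℝ × ℝ => fxy p.1 p.2) (Icc a b ×ˢ Icc c d)) :
    ∀ x ∈ Icc a b, ∀ y ∈ Icc c d,
      (∫ t in a..b, ∫ s in c..d,
          (if t < x then ∫ u in a..t, w u else ∫ u in b..t, w u) *
            (if s < y then ∫ u in c..s, w u else ∫ u in d..s, w u) * fxy t s) =
        (∫ u in a..b, w u) * (∫ u in c..d, w u) * f x y -
          (∫ u in c..d, w u) * (∫ t in a..b, w t * f t y) -
          (∫ u in a..b, w u) * (∫ s in c..d, w s * f x s) +
          ∫ t in a..b, ∫ s in c..d, w t * w s * f t s :=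
  weighted_ostrowski_lemma_general a b c d w hwab hwcd f fx fxy hfc hfx hfxy hfxyc
end

section
/- Under the weight setting, for f:[a,b]×[c,d]→ℝ smooth with |∂²f/∂t∂s| ≤ M everywhere, for all (x,y)∈[a,b]×[c,d]: |f(x,y) - (1/m(a,b))∫_a^b w(t)f(t,y)dt - (1/m(c,d))∫_c^d w(s)f(x,s)ds + (1/(m(a,b)m(c,d)))∫_a^b∫_c^d w(t)w(s)f(t,s)ds dt| ≤ A(x)B(y)·M/(m(a,b)m(c,d)), where A(x)=∫_a^x (x-u)w(u)du + ∫_x^b (u-x)w(u)du and B(y)=∫_c^y (y-u)w(u)du + ∫_y^d (u-y)w(u)du. -/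
/-!
With `m₁ = ∫ w` over `[a, b]` and `m₂ = ∫ w` over `[c, d]`, the error term equals
`(m₁ m₂)⁻¹ ∫∫ w(t) w(s) Δ(t, s)`, where `Δ(t, s) = f(x,y) - f(t,y) - f(x,s) + f(t,s)` is a mixed
second difference. Two applications of the mean value inequality, first in `s` to `∂f/∂t` and
then in `t` to `f(·, y) - f(·, s)`, give `|Δ(t, s)| ≤ M |x - t| |y - s|`; integrating against the
weights produces `M (∫ |x - t| w(t) dt) (∫ |y - s| w(s) ds) = M A(x) B(y)`.
-/

open Set MeasureTheory intervalIntegral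

theorem abs_sub_sub_add_le_of_hasDerivAt {s u : Set ℝ} (hs : Convex ℝ s) (hu : Convex ℝ u)
    {f fx fxy : ℝ → ℝ → ℝ} {M : ℝ}
    (hfx : ∀ x ∈ s, ∀ y ∈ u, HasDerivAt (fun t => f t y) (fx x y) x)
    (hfxy : ∀ x ∈ s, ∀ y ∈ u, HasDerivAt (fx x) (fxy x y) y)
    (hM : ∀ x ∈ s, ∀ y ∈ u, |fxy x y| ≤ M) {x t y v : ℝ}
    (hx : x ∈ s) (ht : t ∈ s) (hy : y ∈ u) (hv : v ∈ u) :
    |f x y - f t y - f x v + f t v| ≤ M * |x - t| * |y - v| := by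
  have hfx_sub : ∀ r ∈ s, |fx r y - fx r v| ≤ M * |y - v| := fun r hr =>
    hu.norm_image_sub_le_of_norm_hasDerivWithin_le
      (fun z hz => (hfxy r hr z hz).hasDerivWithinAt) (hM r hr) hv hy
  have h := hs.norm_image_sub_le_of_norm_hasDerivWithin_le (f := fun r => f r y - f r v)
    (fun r hr => ((hfx r hr y hy).sub (hfx r hr v hv)).hasDerivWithinAt) hfx_sub ht hx
  calc |f x y - f t y - f x v + f t v| = |(f x y - f x v) - (f t y - f t v)| := by
        congr 1; ring
    _ ≤ M * |y - v| * |x - t| := h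
    _ = M * |x - t| * |y - v| := by ring

theorem continuousOn_intervalIntegral_mul {X : Type*} [TopologicalSpace X]
    [FirstCountableTopology X] {K : Set X} (hK : IsCompact K) {w : ℝ → ℝ} {c d : ℝ}
    (hw : IntervalIntegrable w volume c d) {F : X → ℝ → ℝ}
    (hF : ContinuousOn (Function.uncurry F) (K ×ˢ uIcc c d)) :
    ContinuousOn (fun x => ∫ s in c..d, w s * F x s) K := by
  obtain ⟨C, hC⟩ := (hK.prod isCompact_uIcc).exists_bound_of_continuousOn hF
  intro x₀ hx₀
  refine continuousWithinAt_of_dominated_interval (bound := fun s => |w s| * C)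
    ?_ ?_ (hw.abs.mul_const C) (ae_of_all _ fun s hs => ?_)
  · filter_upwards [self_mem_nhdsWithin] with x hx
    exact hw.def'.aestronglyMeasurable.mul
      (((hF.uncurry_left x hx).mono uIoc_subset_uIcc).aestronglyMeasurable measurableSet_uIoc)
  · filter_upwards [self_mem_nhdsWithin] with x hx
    refine ae_of_all _ fun s hs => ?_
    rw [norm_mul]
    exact mul_le_mul_of_nonneg_left (hC (x, s) ⟨hx, uIoc_subset_uIcc hs⟩) (abs_nonneg _)
  · exact continuousWithinAt_const.mul (hF.uncurry_right s (uIoc_subset_uIcc hs) x₀ hx₀)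

theorem abs_integral_integral_le_integral_mul_integral {a b c d : ℝ} (hab : a ≤ b)
    (hcd : c ≤ d) {g : ℝ → ℝ → ℝ} {P Q : ℝ → ℝ}
    (hP : IntervalIntegrable P volume a b) (hQ : IntervalIntegrable Q volume c d)
    (hg : ∀ t ∈ Icc a b, ∀ s ∈ Icc c d, |g t s| ≤ P t * Q s) :
    |∫ t in a..b, ∫ s in c..d, g t s| ≤ (∫ t in a..b, P t) * ∫ s in c..d, Q s := by
  rw [← intervalIntegral.integral_mul_const, ← Real.norm_eq_abs]
  refine norm_integral_le_of_norm_le hab (ae_of_all _ fun t ht => ?_) (hP.mul_const _)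
  rw [← intervalIntegral.integral_const_mul]
  exact norm_integral_le_of_norm_le hcd
    (ae_of_all _ fun s hs => hg t (Ioc_subset_Icc_self ht) s (Ioc_subset_Icc_self hs))
    (hQ.const_mul _)

theorem abs_integral_integral_weighted_le {a b c d x y M : ℝ} (hab : a ≤ b) (hcd : c ≤ d)
    {v w : ℝ → ℝ} (hv0 : ∀ t ∈ Icc a b, 0 ≤ v t) (hw0 : ∀ s ∈ Icc c d, 0 ≤ w s)
    (hv : IntervalIntegrable v volume a b) (hw : IntervalIntegrable w volume c d)
    {g : ℝ → ℝ → ℝ}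
    (hg : ∀ t ∈ Icc a b, ∀ s ∈ Icc c d, |g t s| ≤ M * |x - t| * |y - s|) :
    |∫ t in a..b, ∫ s in c..d, v t * w s * g t s| ≤
      M * (∫ t in a..b, |x - t| * v t) * ∫ s in c..d, |y - s| * w s := by
  rw [← intervalIntegral.integral_const_mul M fun t => |x - t| * v t]
  refine abs_integral_integral_le_integral_mul_integral hab hcd
    ((hv.continuousOn_mul (continuous_sub_left x).abs.continuousOn).const_mul M)
    (hw.continuousOn_mul (continuous_sub_left y).abs.continuousOn) fun t ht s hs => ?_
  have hvw : 0 ≤ v t * w s := mul_nonneg (hv0 t ht) (hw0 s hs)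
  calc |v t * w s * g t s| = v t * w s * |g t s| := by rw [abs_mul, abs_of_nonneg hvw]
    _ ≤ v t * w s * (M * |x - t| * |y - s|) := mul_le_mul_of_nonneg_left (hg t ht s hs) hvw
    _ = M * (|x - t| * v t) * (|y - s| * w s) := by ring

theorem integral_abs_sub_mul_eq {a b x : ℝ} (hx : x ∈ Icc a b) {w : ℝ → ℝ}
    (hw : IntervalIntegrable w volume a b) :
    ∫ u in a..b, |x - u| * w u =
      (∫ u in a..x, (x - u) * w u) + ∫ u in x..b, (u - x) * w u := by
  have hx' : x ∈ uIcc a b := Icc_subset_uIcc hx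
  have hint : ∀ {p q}, uIcc p q ⊆ uIcc a b →
      IntervalIntegrable (fun u => |x - u| * w u) volume p q :=
    fun h => (hw.mono_set h).continuousOn_mul (by fun_prop)
  rw [← integral_add_adjacent_intervals (hint (uIcc_subset_uIcc left_mem_uIcc hx'))
    (hint (uIcc_subset_uIcc hx' right_mem_uIcc))]
  congr 1 <;> refine integral_congr fun u hu => ?_
  · rw [uIcc_of_le hx.1] at hu
    simp only [abs_of_nonneg (sub_nonneg.2 hu.2)]
  · rw [uIcc_of_le hx.2] at hu
    simp only [abs_of_nonpos (sub_nonpos.2 hu.1), neg_sub]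

theorem integral_integral_mul_sub_sub_add {a b c d x y : ℝ} {v w : ℝ → ℝ} {f : ℝ → ℝ → ℝ}
    (hv : IntervalIntegrable v volume a b) (hw : IntervalIntegrable w volume c d)
    (hf : ContinuousOn (Function.uncurry f) (uIcc a b ×ˢ uIcc c d))
    (hx : x ∈ uIcc a b) (hy : y ∈ uIcc c d) :
    ∫ t in a..b, ∫ s in c..d, v t * w s * (f x y - f t y - f x s + f t s) =
      (∫ t in a..b, v t) * (∫ s in c..d, w s) * f x y
        - (∫ s in c..d, w s) * (∫ t in a..b, v t * f t y)
        - (∫ t in a..b, v t) * (∫ s in c..d, w s * f x s)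
        + ∫ t in a..b, ∫ s in c..d, v t * w s * f t s := by
  set H : ℝ → ℝ := fun t => ∫ s in c..d, w s * f t s with hH_def
  have hH : ContinuousOn H (uIcc a b) := continuousOn_intervalIntegral_mul isCompact_uIcc hw hf
  have hwf : ∀ t ∈ uIcc a b, IntervalIntegrable (fun s => w s * f t s) volume c d :=
    fun t ht => hw.mul_continuousOn (hf.uncurry_left t ht)
  have hvf : IntervalIntegrable (fun t => v t * f t y) volume a b :=
    hv.mul_continuousOn (hf.uncurry_right y hy)
  have h_inner : ∀ t ∈ uIcc a b, ∫ s in c..d, v t * w s * (f x y - f t y - f x s + f t s) =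
      (f x y * (∫ s in c..d, w s) - H x) * v t - (∫ s in c..d, w s) * (v t * f t y)
        + v t * H t := by
    intro t ht
    have h_expand : (fun s => v t * w s * (f x y - f t y - f x s + f t s)) =
        fun s => v t * (f x y - f t y) * w s - v t * (w s * f x s) + v t * (w s * f t s) := by
      funext s
      ring
    rw [h_expand, integral_add ((hw.const_mul _).sub ((hwf x hx).const_mul _))
      ((hwf t ht).const_mul _), integral_sub (hw.const_mul _) ((hwf x hx).const_mul _)]
    simp only [intervalIntegral.integral_const_mul, hH_def]
    ring
  have h_outer : ∫ t in a..b, ∫ s in c..d, v t * w s * f t s = ∫ t in a..b, v t * H t := by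
    simp only [hH_def, mul_assoc, intervalIntegral.integral_const_mul]
  rw [integral_congr h_inner, h_outer,
    integral_add ((hv.const_mul _).sub (hvf.const_mul _)) (hv.mul_continuousOn hH),
    integral_sub (hv.const_mul _) (hvf.const_mul _), intervalIntegral.integral_const_mul,
    intervalIntegral.integral_const_mul]
  ring

theorem weighted_ostrowski_double_general (a b c d M : ℝ)
    (w : ℝ → ℝ) (hw0 : ∀ u ∈ Icc a b ∪ Icc c d, 0 ≤ w u)
    (hwab : IntervalIntegrable w volume a b)
    (hwcd : IntervalIntegrable w volume c d)
    (hmab : 0 < ∫ u in a..b, w u) (hmcd : 0 < ∫ u in c..d, w u)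
    (f fx fxy : ℝ → ℝ → ℝ)
    (hfc : ContinuousOn (fun p : ℝ × ℝ => f p.1 p.2) (Icc a b ×ˢ Icc c d))
    (hfx : ∀ x ∈ Icc a b, ∀ y ∈ Icc c d, HasDerivAt (fun t => f t y) (fx x y) x)
    (hfxy : ∀ x ∈ Icc a b, ∀ y ∈ Icc c d, HasDerivAt (fun s => fx x s) (fxy x y) y)
    (hM : ∀ x ∈ Icc a b, ∀ y ∈ Icc c d, |fxy x y| ≤ M) :
    ∀ x ∈ Icc a b, ∀ y ∈ Icc c d,
      |f x y - (1 / ∫ u in a..b, w u) * (∫ t in a..b, w t * f t y) -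
          (1 / ∫ u in c..d, w u) * (∫ s in c..d, w s * f x s) +
          (1 / ((∫ u in a..b, w u) * ∫ u in c..d, w u)) *
            ∫ t in a..b, ∫ s in c..d, w t * w s * f t s| ≤
        ((∫ u in a..x, (x - u) * w u) + ∫ u in x..b, (u - x) * w u) *
          ((∫ u in c..y, (y - u) * w u) + ∫ u in y..d, (u - y) * w u) * M /
          ((∫ u in a..b, w u) * ∫ u in c..d, w u) := by
  intro x hx y hy
  have hab : a ≤ b := hx.1.trans hx.2
  have hcd : c ≤ d := hy.1.trans hy.2
  have h_bound := abs_integral_integral_weighted_le hab hcd (fun t ht => hw0 t (.inl ht))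
    (fun s hs => hw0 s (.inr hs)) hwab hwcd fun t ht s hs =>
      abs_sub_sub_add_le_of_hasDerivAt (convex_Icc a b) (convex_Icc c d) hfx hfxy hM hx ht hy hs
  rw [integral_abs_sub_mul_eq hx hwab, integral_abs_sub_mul_eq hy hwcd] at h_bound
  have h_eq := integral_integral_mul_sub_sub_add hwab hwcd
    (by rwa [uIcc_of_le hab, uIcc_of_le hcd]) (Icc_subset_uIcc hx) (Icc_subset_uIcc hy)
  set I := ∫ t in a..b, ∫ s in c..d, w t * w s * (f x y - f t y - f x s + f t s)
  have hm : 0 < (∫ u in a..b, w u) * ∫ u in c..d, w u := mul_pos hmab hmcd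
  calc _ = |I / ((∫ u in a..b, w u) * ∫ u in c..d, w u)| := by
        rw [h_eq]
        congr 1
        field_simp
    _ ≤ _ := by
        rw [abs_div, abs_of_pos hm]
        exact div_le_div_of_nonneg_right (h_bound.trans_eq (by ring)) hm.le

theorem weighted_ostrowski_double (a b c d M : ℝ) (hab : a < b) (hcd : c < d)
    (w : ℝ → ℝ) (hw0 : ∀ u ∈ Icc a b ∪ Icc c d, 0 ≤ w u)
    (hwab : IntervalIntegrable w volume a b)
    (hwcd : IntervalIntegrable w volume c d)
    (hmab : 0 < ∫ u in a..b, w u) (hmcd : 0 < ∫ u in c..d, w u)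
    (f fx fxy : ℝ → ℝ → ℝ)
    (hfc : ContinuousOn (fun p : ℝ × ℝ => f p.1 p.2) (Icc a b ×ˢ Icc c d))
    (hfx : ∀ x ∈ Icc a b, ∀ y ∈ Icc c d, HasDerivAt (fun t => f t y) (fx x y) x)
    (hfxy : ∀ x ∈ Icc a b, ∀ y ∈ Icc c d, HasDerivAt (fun s => fx x s) (fxy x y) y)
    (hfxyc : ContinuousOn (fun p : ℝ × ℝ => fxy p.1 p.2) (Icc a b ×ˢ Icc c d))
    (hM : ∀ x ∈ Icc a b, ∀ y ∈ Icc c d, |fxy x y| ≤ M) :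
    ∀ x ∈ Icc a b, ∀ y ∈ Icc c d,
      |f x y - (1 / ∫ u in a..b, w u) * (∫ t in a..b, w t * f t y) -
          (1 / ∫ u in c..d, w u) * (∫ s in c..d, w s * f x s) +
          (1 / ((∫ u in a..b, w u) * ∫ u in c..d, w u)) *
            ∫ t in a..b, ∫ s in c..d, w t * w s * f t s| ≤
        ((∫ u in a..x, (x - u) * w u) + ∫ u in x..b, (u - x) * w u) *
          ((∫ u in c..y, (y - u) * w u) + ∫ u in y..d, (u - y) * w u) * M /
          ((∫ u in a..b, w u) * ∫ u in c..d, w u) :=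
  weighted_ostrowski_double_general a b c d M w hw0 hwab hwcd hmab hmcd f fx fxy hfc hfx hfxy hM
end

section
/- Let f:[a,b]×[c,d]→ℝ be C² with |∂²f/∂t∂s| ≤ M. Then at the midpoint: |f((a+b)/2,(c+d)/2) - (1/(b-a))∫_a^b f(t,(c+d)/2)dt - (1/(d-c))∫_c^d f((a+b)/2,s)ds + (1/((b-a)(d-c)))∫_a^b∫_c^d f(t,s)ds dt| ≤ (b-a)(d-c)M/16. -/
open Set MeasureTheory intervalIntegral

lemma ext_cont_prod {s : Set (ℝ × ℝ)} (hs : IsClosed s) {f : ℝ × ℝ → ℝ}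
    (hf : ContinuousOn f s) : ∃ g : ℝ × ℝ → ℝ, Continuous g ∧ ∀ x ∈ s, g x = f x := by
  obtain ⟨g, hg⟩ := ContinuousMap.exists_restrict_eq hs ⟨s.restrict f, hf.restrict⟩
  exact ⟨g, g.continuous, fun x hx => ContinuousMap.congr_fun hg ⟨x, hx⟩⟩

lemma integral_abs_sym (r : ℝ) (hr : 0 ≤ r) : ∫ x in (-r)..r, |x| = r ^ 2 := by
  have h1 : IntervalIntegrable (fun x : ℝ => |x|) volume (-r) 0 :=
    continuous_abs.intervalIntegrable _ _
  have h2 : IntervalIntegrable (fun x : ℝ => |x|) volume 0 r :=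
    continuous_abs.intervalIntegrable _ _
  have e1 : ∫ x in (-r)..(0:ℝ), |x| = r ^ 2 / 2 := by
    rw [intervalIntegral.integral_congr (g := fun x : ℝ => -x) ?_]
    · rw [intervalIntegral.integral_neg, integral_id]; ring
    · intro x hx
      rw [Set.uIcc_of_le (by linarith : -r ≤ (0:ℝ))] at hx
      exact abs_of_nonpos hx.2
  have e2 : ∫ x in (0:ℝ)..r, |x| = r ^ 2 / 2 := by
    rw [intervalIntegral.integral_congr (g := fun x : ℝ => x) ?_]
    · rw [integral_id]; ring
    · intro x hx
      rw [Set.uIcc_of_le hr] at hx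
      exact abs_of_nonneg hx.1
  rw [← intervalIntegral.integral_add_adjacent_intervals h1 h2, e1, e2]; ring

lemma integral_abs_sub_mid (c d : ℝ) (hcd : c ≤ d) :
    ∫ s in c..d, |s - (c + d) / 2| = (d - c) ^ 2 / 4 := by
  have h := intervalIntegral.integral_comp_sub_right (a := c) (b := d)
    (fun x : ℝ => |x|) ((c + d) / 2)
  have h1 : c - (c + d) / 2 = -((d - c) / 2) := by ring
  have h2 : d - (c + d) / 2 = (d - c) / 2 := by ring
  rw [h, h1, h2, integral_abs_sym _ (by linarith)]; ring

theorem midpoint_ostrowski_double (a b c d M : ℝ) (hab : a < b) (hcd : c < d)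
    (f fx fxy : ℝ → ℝ → ℝ)
    (hfc : ContinuousOn (fun p : ℝ × ℝ => f p.1 p.2) (Icc a b ×ˢ Icc c d))
    (hfx : ∀ x ∈ Icc a b, ∀ y ∈ Icc c d, HasDerivAt (fun t => f t y) (fx x y) x)
    (hfxy : ∀ x ∈ Icc a b, ∀ y ∈ Icc c d, HasDerivAt (fun s => fx x s) (fxy x y) y)
    (hfxyc : ContinuousOn (fun p : ℝ × ℝ => fxy p.1 p.2) (Icc a b ×ˢ Icc c d))
    (hM : ∀ x ∈ Icc a b, ∀ y ∈ Icc c d, |fxy x y| ≤ M) :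
    |f ((a + b) / 2) ((c + d) / 2) -
        (1 / (b - a)) * (∫ t in a..b, f t ((c + d) / 2)) -
        (1 / (d - c)) * (∫ s in c..d, f ((a + b) / 2) s) +
        (1 / ((b - a) * (d - c))) * ∫ t in a..b, ∫ s in c..d, f t s| ≤
      (b - a) * (d - c) * M / 16 := by
  set x0 : ℝ := (a + b) / 2 with hx0d
  set y0 : ℝ := (c + d) / 2 with hy0d
  have hx0 : x0 ∈ Icc a b := ⟨by rw [hx0d]; linarith, by rw [hx0d]; linarith⟩
  have hy0 : y0 ∈ Icc c d := ⟨by rw [hy0d]; linarith, by rw [hy0d]; linarith⟩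
  have hbox : IsClosed (Icc a b ×ˢ Icc c d) := isClosed_Icc.prod isClosed_Icc
  have hM0 : 0 ≤ M := (abs_nonneg _).trans (hM x0 hx0 y0 hy0)
  -- extensions
  obtain ⟨F, hFc, hF⟩ := ext_cont_prod hbox hfc
  obtain ⟨G0, hG0c, hG0⟩ := ext_cont_prod hbox hfxyc
  set G : ℝ × ℝ → ℝ := fun p => max (-M) (min M (G0 p)) with hGd
  have hGc : Continuous G := continuous_const.max (continuous_const.min hG0c)
  have hGb : ∀ p, |G p| ≤ M := by
    intro p
    rw [abs_le]
    refine ⟨le_max_left _ _, max_le (by linarith) ((min_le_left _ _))⟩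
  have hGeq : ∀ p ∈ Icc a b ×ˢ Icc c d, G p = fxy p.1 p.2 := by
    intro p hp
    have hb := hM p.1 hp.1 p.2 hp.2
    rw [abs_le] at hb
    rw [hGd]
    simp only [hG0 p hp]
    rw [min_eq_right hb.2, max_eq_right hb.1]
  -- the double primitive
  set g : ℝ → ℝ → ℝ := fun t s => ∫ u in x0..t, ∫ v in y0..s, G (u, v) with hgd
  have hinner : Continuous fun q : ℝ × ℝ => ∫ v in y0..q.2, G (q.1, v) := by
    apply intervalIntegral.continuous_parametric_intervalIntegral_of_continuous
      (f := fun (q : ℝ × ℝ) v => G (q.1, v)) ?_ continuous_snd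
    exact hGc.comp ((continuous_fst.comp continuous_fst).prodMk continuous_snd)
  have hg_cont : Continuous fun p : ℝ × ℝ => g p.1 p.2 := by
    apply intervalIntegral.continuous_parametric_intervalIntegral_of_continuous
      (f := fun (p : ℝ × ℝ) u => ∫ v in y0..p.2, G (u, v)) ?_ continuous_fst
    exact hinner.comp (continuous_snd.prodMk (continuous_snd.comp continuous_fst))
  -- FTC step 1
  have step1 : ∀ u ∈ Icc a b, ∀ s ∈ Icc c d,
      ∫ v in y0..s, G (u, v) = fx u s - fx u y0 := by
    intro u hu s hs
    apply intervalIntegral.integral_eq_sub_of_hasDerivAt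
    · intro v hv
      have hv' : v ∈ Icc c d := Set.uIcc_subset_Icc hy0 hs hv
      have h := hfxy u hu v hv'
      rwa [← hGeq (u, v) (Set.mk_mem_prod hu hv')] at h
    · exact (hGc.comp (continuous_const.prodMk continuous_id)).intervalIntegrable _ _
  -- FTC step 2
  have hg_eq : ∀ t ∈ Icc a b, ∀ s ∈ Icc c d,
      g t s = f t s - f t y0 - f x0 s + f x0 y0 := by
    intro t ht s hs
    have h2 : ∫ u in x0..t, (∫ v in y0..s, G (u, v)) =
        (f t s - f t y0) - (f x0 s - f x0 y0) := by
      apply intervalIntegral.integral_eq_sub_of_hasDerivAt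
      · intro u hu
        have hu' : u ∈ Icc a b := Set.uIcc_subset_Icc hx0 ht hu
        have h := (hfx u hu' s hs).sub (hfx u hu' y0 hy0)
        rwa [← step1 u hu' s hs] at h
      · exact (hinner.comp (continuous_id.prodMk continuous_const)).intervalIntegrable _ _
    rw [hgd]
    simp only []
    rw [h2]; ring
  -- pointwise bounds
  have hin_b : ∀ u s, |∫ v in y0..s, G (u, v)| ≤ M * |s - y0| := by
    intro u s
    have h := intervalIntegral.norm_integral_le_of_norm_le_const
      (C := M) (f := fun v => G (u, v)) (a := y0) (b := s) (fun v _ => hGb _)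
    simpa [Real.norm_eq_abs] using h
  have hg_b : ∀ t s, |g t s| ≤ M * |s - y0| * |t - x0| := by
    intro t s
    have h := intervalIntegral.norm_integral_le_of_norm_le_const
      (C := M * |s - y0|) (f := fun u => ∫ v in y0..s, G (u, v)) (a := x0) (b := t)
      (fun u _ => by simpa [Real.norm_eq_abs] using hin_b u s)
    simpa [Real.norm_eq_abs] using h
  -- integrability facts
  have hfint : ∀ t ∈ Icc a b, IntervalIntegrable (fun s => f t s) volume c d := by
    intro t ht
    apply ContinuousOn.intervalIntegrable
    rw [Set.uIcc_of_le hcd.le]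
    exact hfc.comp (Continuous.prodMk_right t).continuousOn fun s hs => Set.mk_mem_prod ht hs
  -- inner integral identity
  have Jin : ∀ t ∈ Icc a b, ∫ s in c..d, g t s =
      (∫ s in c..d, f t s) - (d - c) * f t y0 - (∫ s in c..d, f x0 s) +
        (d - c) * f x0 y0 := by
    intro t ht
    have e0 : ∫ s in c..d, g t s =
        ∫ s in c..d, (f t s - f t y0 - f x0 s + f x0 y0) := by
      apply intervalIntegral.integral_congr
      intro s hs
      rw [Set.uIcc_of_le hcd.le] at hs
      exact hg_eq t ht s hs
    have i1 := hfint t ht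
    have i2 := hfint x0 hx0
    have ic : ∀ r : ℝ, IntervalIntegrable (fun _ : ℝ => r) volume c d :=
      fun r => intervalIntegrable_const
    rw [e0, intervalIntegral.integral_add ((i1.sub (ic _)).sub i2) (ic _),
      intervalIntegral.integral_sub (i1.sub (ic _)) i2,
      intervalIntegral.integral_sub i1 (ic _),
      intervalIntegral.integral_const, intervalIntegral.integral_const]
    simp only [smul_eq_mul]
  -- integrability of the sliced integrals in t
  have hFp : Continuous fun t : ℝ => ∫ s in c..d, F (t, s) :=
    intervalIntegral.continuous_parametric_intervalIntegral_of_continuous'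
      (f := fun t s => F (t, s)) (by exact hFc) c d
  have hslice : ContinuousOn (fun t => ∫ s in c..d, f t s) (Icc a b) := by
    apply hFp.continuousOn.congr
    intro t ht
    apply intervalIntegral.integral_congr
    intro s hs
    rw [Set.uIcc_of_le hcd.le] at hs
    exact (hF (t, s) (Set.mk_mem_prod ht hs)).symm
  have islice : IntervalIntegrable (fun t => ∫ s in c..d, f t s) volume a b := by
    apply ContinuousOn.intervalIntegrable
    rwa [Set.uIcc_of_le hab.le]
  have iy0 : IntervalIntegrable (fun t => f t y0) volume a b := by
    apply ContinuousOn.intervalIntegrable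
    rw [Set.uIcc_of_le hab.le]
    exact hfc.comp (continuous_id.prodMk continuous_const).continuousOn
      fun t ht => Set.mk_mem_prod ht hy0
  -- outer identity
  have Ieq : ∫ t in a..b, ∫ s in c..d, g t s =
      (∫ t in a..b, ∫ s in c..d, f t s) - (d - c) * (∫ t in a..b, f t y0) -
        (b - a) * (∫ s in c..d, f x0 s) + (b - a) * (d - c) * f x0 y0 := by
    have e0 : ∫ t in a..b, ∫ s in c..d, g t s =
        ∫ t in a..b, ((∫ s in c..d, f t s) - (d - c) * f t y0 -
          (∫ s in c..d, f x0 s) + (d - c) * f x0 y0) := by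
      apply intervalIntegral.integral_congr
      intro t ht
      rw [Set.uIcc_of_le hab.le] at ht
      exact Jin t ht
    have ic : ∀ r : ℝ, IntervalIntegrable (fun _ : ℝ => r) volume a b :=
      fun r => intervalIntegrable_const
    rw [e0, intervalIntegral.integral_add ((islice.sub (iy0.const_mul _)).sub (ic _)) (ic _),
      intervalIntegral.integral_sub (islice.sub (iy0.const_mul _)) (ic _),
      intervalIntegral.integral_sub islice (iy0.const_mul _),
      intervalIntegral.integral_const_mul,
      intervalIntegral.integral_const, intervalIntegral.integral_const]
    simp only [smul_eq_mul]
    ring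
  -- bound on the inner integral
  have hgout : Continuous fun t : ℝ => ∫ s in c..d, g t s :=
    intervalIntegral.continuous_parametric_intervalIntegral_of_continuous'
      (f := fun t s => g t s) (by exact hg_cont) c d
  have hIn : ∀ t : ℝ, |∫ s in c..d, g t s| ≤ M * |t - x0| * ((d - c) ^ 2 / 4) := by
    intro t
    have h1 : |∫ s in c..d, g t s| ≤ ∫ s in c..d, |g t s| :=
      intervalIntegral.abs_integral_le_integral_abs hcd.le
    have h2 : ∫ s in c..d, |g t s| ≤ ∫ s in c..d, M * |t - x0| * |s - y0| := by
      apply intervalIntegral.integral_mono_on hcd.le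
      · exact (hg_cont.comp (Continuous.prodMk_right t)).abs.intervalIntegrable _ _
      · exact (continuous_const.mul ((continuous_id.sub continuous_const).abs)).intervalIntegrable _ _
      · intro s _
        calc |g t s| ≤ M * |s - y0| * |t - x0| := hg_b t s
          _ = M * |t - x0| * |s - y0| := by ring
    have h3 : ∫ s in c..d, M * |t - x0| * |s - y0| = M * |t - x0| * ((d - c) ^ 2 / 4) := by
      rw [intervalIntegral.integral_const_mul, hy0d, integral_abs_sub_mid c d hcd.le]
    linarith
  -- bound on the double integral
  have hIb : |∫ t in a..b, ∫ s in c..d, g t s| ≤ M * ((d - c) ^ 2 / 4) * ((b - a) ^ 2 / 4) := by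
    have h1 : |∫ t in a..b, ∫ s in c..d, g t s| ≤ ∫ t in a..b, |∫ s in c..d, g t s| :=
      intervalIntegral.abs_integral_le_integral_abs hab.le
    have h2 : ∫ t in a..b, |∫ s in c..d, g t s| ≤
        ∫ t in a..b, M * ((d - c) ^ 2 / 4) * |t - x0| := by
      apply intervalIntegral.integral_mono_on hab.le
      · exact hgout.abs.intervalIntegrable _ _
      · exact (continuous_const.mul ((continuous_id.sub continuous_const).abs)).intervalIntegrable _ _
      · intro t _
        calc |∫ s in c..d, g t s| ≤ M * |t - x0| * ((d - c) ^ 2 / 4) := hIn t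
          _ = M * ((d - c) ^ 2 / 4) * |t - x0| := by ring
    have h3 : ∫ t in a..b, M * ((d - c) ^ 2 / 4) * |t - x0| =
        M * ((d - c) ^ 2 / 4) * ((b - a) ^ 2 / 4) := by
      rw [intervalIntegral.integral_const_mul, hx0d, integral_abs_sub_mid a b hab.le]
    linarith
  -- final computation
  have hne1 : b - a ≠ 0 := by linarith
  have hne2 : d - c ≠ 0 := by linarith
  have hpos : 0 < (b - a) * (d - c) := mul_pos (by linarith) (by linarith)
  have key : f x0 y0 - (1 / (b - a)) * (∫ t in a..b, f t y0) -
      (1 / (d - c)) * (∫ s in c..d, f x0 s) +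
      (1 / ((b - a) * (d - c))) * (∫ t in a..b, ∫ s in c..d, f t s) =
      (∫ t in a..b, ∫ s in c..d, g t s) / ((b - a) * (d - c)) := by
    rw [Ieq]
    field_simp
    ring
  rw [key, abs_div, abs_of_pos hpos, div_le_iff₀ hpos]
  have heq : (b - a) * (d - c) * M / 16 * ((b - a) * (d - c)) =
      M * ((d - c) ^ 2 / 4) * ((b - a) ^ 2 / 4) := by ring
  linarith
end

section
/- With subintervals [α₁,α₂]⊆[a,b] and [β₁,β₂]⊆[c,d], weight w nonnegative, and f C² with |∂²f/∂t∂s| ≤ M, for (x,y)∈[α₁,α₂]×[β₁,β₂]: |f(x,y) - (1/m(α₁,α₂))∫_{α₁}^{α₂}w(t)f(t,y)dt - (1/m(β₁,β₂))∫_{β₁}^{β₂}w(s)f(x,s)ds + (1/(m(α₁,α₂)m(β₁,β₂)))∫_{α₁}^{α₂}∫_{β₁}^{β₂}w(t)w(s)f(t,s)ds dt| ≤ A₁(x)B₁(y)M/(m(α₁,α₂)m(β₁,β₂)), where A₁(x)=∫_{α₁}^x(x-u)w(u)du+∫_x^{α₂}(u-x)w(u)du and B₁(y)=∫_{β₁}^y(y-u)w(u)du+∫_y^{β₂}(u-y)w(u)du.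 -/
/-!
Multiplied by `m(α₁,α₂) m(β₁,β₂)`, the quantity inside the absolute value is the weighted double
integral of the mixed difference `f x y - f t y - f x s + f t s`. Two applications of the mean
value theorem bound that difference by `M |x - t| |y - s|`, and the weighted double integral of
`|x - t| |y - s|` factors as `A₁(x) B₁(y)`.
-/

open Set MeasureTheory intervalIntegral

theorem norm_mixed_difference_le {E : Type*} [NormedAddCommGroup E] [NormedSpace ℝ E]
    {S T : Set ℝ} (hS : Convex ℝ S) (hT : Convex ℝ T) {f fx fxy : ℝ → ℝ → E} {M : ℝ}
    (hfx : ∀ x ∈ S, ∀ y ∈ T, HasDerivAt (fun t => f t y) (fx x y) x)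
    (hfxy : ∀ x ∈ S, ∀ y ∈ T, HasDerivAt (fun s => fx x s) (fxy x y) y)
    (hM : ∀ x ∈ S, ∀ y ∈ T, ‖fxy x y‖ ≤ M) {x t y s : ℝ} (hx : x ∈ S) (ht : t ∈ S)
    (hy : y ∈ T) (hs : s ∈ T) :
    ‖f x y - f t y - f x s + f t s‖ ≤ M * (|x - t| * |y - s|) := by
  have hfx_sub : ∀ u ∈ S, ‖fx u y - fx u s‖ ≤ M * |y - s| := fun u hu =>
    hT.norm_image_sub_le_of_norm_hasDerivWithin_le
      (fun v hv => (hfxy u hu v hv).hasDerivWithinAt) (hM u hu) hs hy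
  have hdiff := hS.norm_image_sub_le_of_norm_hasDerivWithin_le
    (fun u hu => ((hfx u hu y hy).sub (hfx u hu s hs)).hasDerivWithinAt) hfx_sub ht hx
  calc ‖f x y - f t y - f x s + f t s‖ = ‖(f x y - f x s) - (f t y - f t s)‖ := by
        congr 1; abel
    _ ≤ M * |y - s| * |x - t| := hdiff
    _ = M * (|x - t| * |y - s|) := by ring

section WeightedMeans

variable {α β : Type*} [MeasurableSpace α] [MeasurableSpace β]
  {μ : Measure α} {ν : Measure β} [SFinite μ] [SFinite ν]

theorem integral_prod_mul_mixed_difference {p : α → ℝ} {q : β → ℝ} {F : α → β → ℝ}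
    {x : α} {y : β}
    (hp : Integrable p μ) (hq : Integrable q ν)
    (hFy : Integrable (fun t => p t * F t y) μ) (hFx : Integrable (fun s => q s * F x s) ν)
    (hF : Integrable (fun z : α × β => p z.1 * q z.2 * F z.1 z.2) (μ.prod ν)) :
    ∫ z, p z.1 * q z.2 * (F x y - F z.1 y - F x z.2 + F z.1 z.2) ∂μ.prod ν =
      (∫ t, p t ∂μ) * (∫ s, q s ∂ν) * F x y - (∫ t, p t * F t y ∂μ) * (∫ s, q s ∂ν) -
        (∫ t, p t ∂μ) * (∫ s, q s * F x s ∂ν) + ∫ t, ∫ s, p t * q s * F t s ∂ν ∂μ := by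
  have h₁ : Integrable (fun z : α × β => p z.1 * (q z.2 * F x y)) (μ.prod ν) :=
    hp.mul_prod (hq.mul_const _)
  have h₂ : Integrable (fun z : α × β => p z.1 * F z.1 y * q z.2) (μ.prod ν) := hFy.mul_prod hq
  have h₃ : Integrable (fun z : α × β => p z.1 * (q z.2 * F x z.2)) (μ.prod ν) := hp.mul_prod hFx
  calc ∫ z, p z.1 * q z.2 * (F x y - F z.1 y - F x z.2 + F z.1 z.2) ∂μ.prod ν
      = ∫ z, (p z.1 * (q z.2 * F x y) - p z.1 * F z.1 y * q z.2 - p z.1 * (q z.2 * F x z.2) +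
          p z.1 * q z.2 * F z.1 z.2) ∂μ.prod ν := by
        congr 1; ext z; ring
    _ = _ := by
      rw [integral_add (by exact (h₁.sub h₂).sub h₃) hF, integral_sub (by exact h₁.sub h₂) h₃,
        integral_sub h₁ h₂, integral_prod_mul p (fun s => q s * F x y),
        integral_prod_mul (fun t => p t * F t y) q, integral_prod_mul p (fun s => q s * F x s),
        MeasureTheory.integral_mul_const, integral_integral hF, mul_assoc]

theorem norm_integral_prod_le_of_norm_le_mul {E : Type*} [NormedAddCommGroup E]
    [NormedSpace ℝ E] {g : α × β → E} {φ : α → ℝ} {ψ : β → ℝ}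
    (hφ : Integrable φ μ) (hψ : Integrable ψ ν) (h : ∀ᵐ z ∂μ.prod ν, ‖g z‖ ≤ φ z.1 * ψ z.2) :
    ‖∫ z, g z ∂μ.prod ν‖ ≤ (∫ t, φ t ∂μ) * ∫ s, ψ s ∂ν := by
  rw [← integral_prod_mul]
  exact norm_integral_le_of_norm_le (hφ.mul_prod hψ) h

theorem MeasureTheory.IntegrableOn.mul_prod {L : Type*} [NormedRing L] {f : α → L} {g : β → L}
    {I : Set α} {J : Set β}
    (hf : IntegrableOn f I μ) (hg : IntegrableOn g J ν) :
    IntegrableOn (fun z : α × β => f z.1 * g z.2) (I ×ˢ J) (μ.prod ν) := by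
  rw [IntegrableOn, ← Measure.prod_restrict]
  exact Integrable.mul_prod hf hg

theorem abs_sub_weighted_means_le {I : Set α} {J : Set β} (hI : MeasurableSet I)
    (hJ : MeasurableSet J) {p φ : α → ℝ} {q ψ : β → ℝ} {F : α → β → ℝ} {x : α} {y : β} {M : ℝ}
    (hp0 : ∀ t ∈ I, 0 ≤ p t) (hq0 : ∀ s ∈ J, 0 ≤ q s)
    (hP : 0 < ∫ t in I, p t ∂μ) (hQ : 0 < ∫ s in J, q s ∂ν)
    (hp : IntegrableOn p I μ) (hq : IntegrableOn q J ν)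
    (hFy : IntegrableOn (fun t => p t * F t y) I μ) (hFx : IntegrableOn (fun s => q s * F x s) J ν)
    (hF : IntegrableOn (fun z : α × β => p z.1 * q z.2 * F z.1 z.2) (I ×ˢ J) (μ.prod ν))
    (hφ : IntegrableOn (fun t => φ t * p t) I μ) (hψ : IntegrableOn (fun s => ψ s * q s) J ν)
    (hmix : ∀ t ∈ I, ∀ s ∈ J, |F x y - F t y - F x s + F t s| ≤ M * (φ t * ψ s)) :
    |F x y - (1 / ∫ t in I, p t ∂μ) * (∫ t in I, p t * F t y ∂μ) -
        (1 / ∫ s in J, q s ∂ν) * (∫ s in J, q s * F x s ∂ν) +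
        (1 / ((∫ t in I, p t ∂μ) * ∫ s in J, q s ∂ν)) *
          ∫ t in I, ∫ s in J, p t * q s * F t s ∂ν ∂μ| ≤
      (∫ t in I, φ t * p t ∂μ) * (∫ s in J, ψ s * q s ∂ν) * M /
        ((∫ t in I, p t ∂μ) * ∫ s in J, q s ∂ν) := by
  have hPQ := mul_pos hP hQ
  rw [IntegrableOn, ← Measure.prod_restrict] at hF
  have hmem : ∀ᵐ z ∂(μ.restrict I).prod (ν.restrict J), z ∈ I ×ˢ J := by
    rw [Measure.prod_restrict]
    exact ae_restrict_mem (hI.prod hJ)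
  have hbound := norm_integral_prod_le_of_norm_le_mul hφ (hψ.const_mul M)
    (g := fun z => p z.1 * q z.2 * (F x y - F z.1 y - F x z.2 + F z.1 z.2)) <| by
      filter_upwards [hmem] with z ⟨ht, hs⟩
      rw [Real.norm_eq_abs, abs_mul, abs_mul, abs_of_nonneg (hp0 _ ht), abs_of_nonneg (hq0 _ hs)]
      calc p z.1 * q z.2 * |F x y - F z.1 y - F x z.2 + F z.1 z.2|
          ≤ p z.1 * q z.2 * (M * (φ z.1 * ψ z.2)) :=
            mul_le_mul_of_nonneg_left (hmix _ ht _ hs) (mul_nonneg (hp0 _ ht) (hq0 _ hs))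
        _ = φ z.1 * p z.1 * (M * (ψ z.2 * q z.2)) := by ring
  rw [integral_prod_mul_mixed_difference hp hq hFy hFx hF, MeasureTheory.integral_const_mul,
    Real.norm_eq_abs] at hbound
  have hnormalize : F x y - (1 / ∫ t in I, p t ∂μ) * (∫ t in I, p t * F t y ∂μ) -
        (1 / ∫ s in J, q s ∂ν) * (∫ s in J, q s * F x s ∂ν) +
        (1 / ((∫ t in I, p t ∂μ) * ∫ s in J, q s ∂ν)) *
          ∫ t in I, ∫ s in J, p t * q s * F t s ∂ν ∂μ =
      ((∫ t in I, p t ∂μ) * (∫ s in J, q s ∂ν) * F x y -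
          (∫ t in I, p t * F t y ∂μ) * (∫ s in J, q s ∂ν) -
          (∫ t in I, p t ∂μ) * (∫ s in J, q s * F x s ∂ν) +
          ∫ t in I, ∫ s in J, p t * q s * F t s ∂ν ∂μ) /
        ((∫ t in I, p t ∂μ) * ∫ s in J, q s ∂ν) := by
    field_simp
  rw [hnormalize, abs_div, abs_of_pos hPQ]
  exact div_le_div_of_nonneg_right (hbound.trans_eq (by ring)) hPQ.le

end WeightedMeans

theorem integral_abs_sub_mul_eq_add {w : ℝ → ℝ} {a b x : ℝ} (hx : x ∈ Icc a b)
    (hw : IntervalIntegrable w volume a b) :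
    ∫ u in a..b, |x - u| * w u = (∫ u in a..x, (x - u) * w u) + ∫ u in x..b, (u - x) * w u := by
  have hw' : IntervalIntegrable (fun u => |x - u| * w u) volume a b :=
    hw.continuousOn_mul (continuous_const.sub continuous_id).abs.continuousOn
  have hx' : x ∈ uIcc a b := Icc_subset_uIcc hx
  rw [← integral_add_adjacent_intervals (hw'.mono_set (uIcc_subset_uIcc_left hx'))
    (hw'.mono_set (uIcc_subset_uIcc_right hx'))]
  congr 1 <;> refine integral_congr fun u hu => ?_
  · rw [uIcc_of_le hx.1] at hu
    simp only [abs_of_nonneg (sub_nonneg.2 hu.2)]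
  · rw [uIcc_of_le hx.2] at hu
    simp only [abs_sub_comm x u, abs_of_nonneg (sub_nonneg.2 hu.1)]

theorem weighted_ostrowski_subinterval_general (a b c d α₁ α₂ β₁ β₂ M : ℝ)
    (ha₁ : a ≤ α₁) (hα₂ : α₂ ≤ b)
    (hb₁ : c ≤ β₁) (hβ₂ : β₂ ≤ d)
    (w : ℝ → ℝ) (hw0 : ∀ u ∈ Icc a b ∪ Icc c d, 0 ≤ w u)
    (hwab : IntervalIntegrable w volume a b)
    (hwcd : IntervalIntegrable w volume c d)
    (hmα : 0 < ∫ u in α₁..α₂, w u) (hmβ : 0 < ∫ u in β₁..β₂, w u)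
    (f fx fxy : ℝ → ℝ → ℝ)
    (hfc : ContinuousOn (fun p : ℝ × ℝ => f p.1 p.2) (Icc a b ×ˢ Icc c d))
    (hfx : ∀ x ∈ Icc a b, ∀ y ∈ Icc c d, HasDerivAt (fun t => f t y) (fx x y) x)
    (hfxy : ∀ x ∈ Icc a b, ∀ y ∈ Icc c d, HasDerivAt (fun s => fx x s) (fxy x y) y)
    (hM : ∀ x ∈ Icc a b, ∀ y ∈ Icc c d, |fxy x y| ≤ M) :
    ∀ x ∈ Icc α₁ α₂, ∀ y ∈ Icc β₁ β₂,
      |f x y - (1 / ∫ u in α₁..α₂, w u) * (∫ t in α₁..α₂, w t * f t y) -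
          (1 / ∫ u in β₁..β₂, w u) * (∫ s in β₁..β₂, w s * f x s) +
          (1 / ((∫ u in α₁..α₂, w u) * ∫ u in β₁..β₂, w u)) *
            ∫ t in α₁..α₂, ∫ s in β₁..β₂, w t * w s * f t s| ≤
        ((∫ u in α₁..x, (x - u) * w u) + ∫ u in x..α₂, (u - x) * w u) *
          ((∫ u in β₁..y, (y - u) * w u) + ∫ u in y..β₂, (u - y) * w u) * M /
          ((∫ u in α₁..α₂, w u) * ∫ u in β₁..β₂, w u) := by
  intro x hx y hy
  have hα : α₁ ≤ α₂ := hx.1.trans hx.2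
  have hβ : β₁ ≤ β₂ := hy.1.trans hy.2
  have hI : Icc α₁ α₂ ⊆ Icc a b := Icc_subset_Icc ha₁ hα₂
  have hJ : Icc β₁ β₂ ⊆ Icc c d := Icc_subset_Icc hb₁ hβ₂
  have hwI : IntegrableOn w (Icc α₁ α₂) :=
    ((intervalIntegrable_iff_integrableOn_Icc_of_le (ha₁.trans (hα.trans hα₂))).1 hwab).mono_set hI
  have hwJ : IntegrableOn w (Icc β₁ β₂) :=
    ((intervalIntegrable_iff_integrableOn_Icc_of_le (hb₁.trans (hβ.trans hβ₂))).1 hwcd).mono_set hJ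
  have hfR := hfc.mono (prod_mono hI hJ)
  rw [← integral_abs_sub_mul_eq_add hx ((intervalIntegrable_iff_integrableOn_Icc_of_le hα).2 hwI),
    ← integral_abs_sub_mul_eq_add hy ((intervalIntegrable_iff_integrableOn_Icc_of_le hβ).2 hwJ)]
  simp only [integral_of_le hα, integral_of_le hβ, ← integral_Icc_eq_integral_Ioc] at hmα hmβ ⊢
  refine abs_sub_weighted_means_le measurableSet_Icc measurableSet_Icc
    (fun t ht => hw0 t (.inl (hI ht))) (fun s hs => hw0 s (.inr (hJ hs))) hmα hmβ hwI hwJ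
    (hwI.mul_continuousOn (hfR.comp (continuous_id.prodMk continuous_const).continuousOn
      fun t ht => ⟨ht, hy⟩) isCompact_Icc)
    (hwJ.mul_continuousOn (hfR.comp (continuous_const.prodMk continuous_id).continuousOn
      fun s hs => ⟨hx, hs⟩) isCompact_Icc)
    ((hwI.mul_prod hwJ).mul_continuousOn hfR (isCompact_Icc.prod isCompact_Icc))
    (hwI.continuousOn_mul (continuous_const.sub continuous_id).abs.continuousOn isCompact_Icc)
    (hwJ.continuousOn_mul (continuous_const.sub continuous_id).abs.continuousOn isCompact_Icc)
    fun t ht s hs => ?_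
  exact norm_mixed_difference_le (convex_Icc a b) (convex_Icc c d) hfx hfxy hM (hI hx) (hI ht)
    (hJ hy) (hJ hs)

theorem weighted_ostrowski_subinterval (a b c d α₁ α₂ β₁ β₂ M : ℝ)
    (ha₁ : a ≤ α₁) (hα : α₁ < α₂) (hα₂ : α₂ ≤ b)
    (hb₁ : c ≤ β₁) (hβ : β₁ < β₂) (hβ₂ : β₂ ≤ d)
    (w : ℝ → ℝ) (hw0 : ∀ u ∈ Icc a b ∪ Icc c d, 0 ≤ w u)
    (hwab : IntervalIntegrable w volume a b)
    (hwcd : IntervalIntegrable w volume c d)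
    (hmα : 0 < ∫ u in α₁..α₂, w u) (hmβ : 0 < ∫ u in β₁..β₂, w u)
    (f fx fxy : ℝ → ℝ → ℝ)
    (hfc : ContinuousOn (fun p : ℝ × ℝ => f p.1 p.2) (Icc a b ×ˢ Icc c d))
    (hfx : ∀ x ∈ Icc a b, ∀ y ∈ Icc c d, HasDerivAt (fun t => f t y) (fx x y) x)
    (hfxy : ∀ x ∈ Icc a b, ∀ y ∈ Icc c d, HasDerivAt (fun s => fx x s) (fxy x y) y)
    (hfxyc : ContinuousOn (fun p : ℝ × ℝ => fxy p.1 p.2) (Icc a b ×ˢ Icc c d))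
    (hM : ∀ x ∈ Icc a b, ∀ y ∈ Icc c d, |fxy x y| ≤ M) :
    ∀ x ∈ Icc α₁ α₂, ∀ y ∈ Icc β₁ β₂,
      |f x y - (1 / ∫ u in α₁..α₂, w u) * (∫ t in α₁..α₂, w t * f t y) -
          (1 / ∫ u in β₁..β₂, w u) * (∫ s in β₁..β₂, w s * f x s) +
          (1 / ((∫ u in α₁..α₂, w u) * ∫ u in β₁..β₂, w u)) *
            ∫ t in α₁..α₂, ∫ s in β₁..β₂, w t * w s * f t s| ≤
        ((∫ u in α₁..x, (x - u) * w u) + ∫ u in x..α₂, (u - x) * w u) *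
          ((∫ u in β₁..y, (y - u) * w u) + ∫ u in y..β₂, (u - y) * w u) * M /
          ((∫ u in α₁..α₂, w u) * ∫ u in β₁..β₂, w u) :=
  weighted_ostrowski_subinterval_general a b c d α₁ α₂ β₁ β₂ M ha₁ hα₂ hb₁ hβ₂ w hw0 hwab hwcd hmα
    hmβ f fx fxy hfc hfx hfxy hM
end

section
/- Let a ≤ α₁ < α₂ ≤ b, c ≤ β₁ < β₂ ≤ d with (a+b)/2 ∈ [α₁,α₂] and (c+d)/2 ∈ [β₁,β₂], and f:[a,b]×[c,d]→ℝ C² with |∂²f/∂t∂s| ≤ M. Then |f((a+b)/2,(c+d)/2) - (1/(α₂-α₁))∫_{α₁}^{α₂}f(t,(c+d)/2)dt - (1/(β₂-β₁))∫_{β₁}^{β₂}f((a+b)/2,s)ds + (1/((α₂-α₁)(β₂-β₁)))∫_{α₁}^{α₂}∫_{β₁}^{β₂}f(t,s)ds dt| ≤ A₃B₃M/(64(α₂-α₁)(β₂-β₁)), where A₃=(a+b-2α₁)²+(a+b-2α₂)² and B₃=(c+d-2β₁)²+(c+d-2β₂)². -/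
open Set MeasureTheory intervalIntegral

lemma integral_abs_sub_mid_s9 {p q m : ℝ} (hpm : p ≤ m) (hmq : m ≤ q) :
    ∫ x in p..q, |x - m| = ((m - p) ^ 2 + (q - m) ^ 2) / 2 := by
  have hint : ∀ u v : ℝ, IntervalIntegrable (fun x => |x - m|) volume u v :=
    fun u v => (continuous_abs.comp (continuous_id.sub continuous_const)).intervalIntegrable u v
  rw [← intervalIntegral.integral_add_adjacent_intervals (hint p m) (hint m q)]
  have h1 : ∫ x in p..m, |x - m| = (m - p) ^ 2 / 2 := by
    have he : EqOn (fun x => |x - m|) (fun x => m - x) (uIcc p m) := by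
      intro x hx
      rw [uIcc_of_le hpm] at hx
      simp only
      rw [abs_sub_comm, abs_of_nonneg (by linarith [hx.2])]
    rw [intervalIntegral.integral_congr he,
      intervalIntegral.integral_sub intervalIntegrable_const intervalIntegral.intervalIntegrable_id]
    simp [integral_id]
    ring
  have h2 : ∫ x in m..q, |x - m| = (q - m) ^ 2 / 2 := by
    have he : EqOn (fun x => |x - m|) (fun x => x - m) (uIcc m q) := by
      intro x hx
      rw [uIcc_of_le hmq] at hx
      simp only
      rw [abs_of_nonneg (by linarith [hx.1])]
    rw [intervalIntegral.integral_congr he,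
      intervalIntegral.integral_sub intervalIntegral.intervalIntegrable_id intervalIntegrable_const]
    simp [integral_id]
    ring
  rw [h1, h2]; ring


theorem midpoint_ostrowski_subinterval (a b c d α₁ α₂ β₁ β₂ M : ℝ)
    (ha₁ : a ≤ α₁) (hα : α₁ < α₂) (hα₂ : α₂ ≤ b)
    (hb₁ : c ≤ β₁) (hβ : β₁ < β₂) (hβ₂ : β₂ ≤ d)
    (hmidα : (a + b) / 2 ∈ Icc α₁ α₂) (hmidβ : (c + d) / 2 ∈ Icc β₁ β₂)
    (f fx fxy : ℝ → ℝ → ℝ)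
    (hfc : ContinuousOn (fun p : ℝ × ℝ => f p.1 p.2) (Icc a b ×ˢ Icc c d))
    (hfx : ∀ x ∈ Icc a b, ∀ y ∈ Icc c d, HasDerivAt (fun t => f t y) (fx x y) x)
    (hfxy : ∀ x ∈ Icc a b, ∀ y ∈ Icc c d, HasDerivAt (fun s => fx x s) (fxy x y) y)
    (hfxyc : ContinuousOn (fun p : ℝ × ℝ => fxy p.1 p.2) (Icc a b ×ˢ Icc c d))
    (hM : ∀ x ∈ Icc a b, ∀ y ∈ Icc c d, |fxy x y| ≤ M) :
    |f ((a + b) / 2) ((c + d) / 2) -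
        (1 / (α₂ - α₁)) * (∫ t in α₁..α₂, f t ((c + d) / 2)) -
        (1 / (β₂ - β₁)) * (∫ s in β₁..β₂, f ((a + b) / 2) s) +
        (1 / ((α₂ - α₁) * (β₂ - β₁))) * ∫ t in α₁..α₂, ∫ s in β₁..β₂, f t s| ≤
      ((a + b - 2 * α₁) ^ 2 + (a + b - 2 * α₂) ^ 2) *
        ((c + d - 2 * β₁) ^ 2 + (c + d - 2 * β₂) ^ 2) * M /
        (64 * (α₂ - α₁) * (β₂ - β₁)) := by
  set x₀ := (a + b) / 2 with hx₀def
  set y₀ := (c + d) / 2 with hy₀def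
  have hab : Icc α₁ α₂ ⊆ Icc a b := Icc_subset_Icc ha₁ hα₂
  have hcd : Icc β₁ β₂ ⊆ Icc c d := Icc_subset_Icc hb₁ hβ₂
  have hx₀ab : x₀ ∈ Icc a b := hab hmidα
  have hy₀cd : y₀ ∈ Icc c d := hcd hmidβ
  have hΔα : (0:ℝ) < α₂ - α₁ := by linarith
  have hΔβ : (0:ℝ) < β₂ - β₁ := by linarith
  have hM0 : 0 ≤ M := le_trans (abs_nonneg _) (hM a (by constructor <;> linarith) c (by constructor <;> linarith))
  -- slice continuity
  have hslice_t : ∀ s ∈ Icc c d, ContinuousOn (fun t => f t s) (Icc a b) := by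
    intro s hs
    exact hfc.comp (g := fun p : ℝ × ℝ => f p.1 p.2)
      ((continuous_id.prodMk continuous_const).continuousOn) (fun t ht => ⟨ht, hs⟩)
  have hslice_s : ∀ t ∈ Icc a b, ContinuousOn (fun s => f t s) (Icc c d) := by
    intro t ht
    exact hfc.comp (g := fun p : ℝ × ℝ => f p.1 p.2)
      ((continuous_const.prodMk continuous_id).continuousOn) (fun s hs => ⟨ht, hs⟩)
  have hslice_xy : ∀ t ∈ Icc a b, ContinuousOn (fun s => fxy t s) (Icc c d) := by
    intro t ht
    exact hfxyc.comp (g := fun p : ℝ × ℝ => fxy p.1 p.2)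
      ((continuous_const.prodMk continuous_id).continuousOn) (fun s hs => ⟨ht, hs⟩)
  -- bound on fx differences
  have hfxbound : ∀ u ∈ Icc a b, ∀ s ∈ Icc c d, |fx u s - fx u y₀| ≤ M * |s - y₀| := by
    intro u hu s hs
    have hsub : uIcc y₀ s ⊆ Icc c d := uIcc_subset_Icc hy₀cd hs
    have hftc : ∫ v in y₀..s, fxy u v = fx u s - fx u y₀ :=
      intervalIntegral.integral_eq_sub_of_hasDerivAt
        (fun v hv => hfxy u hu v (hsub hv))
        (((hslice_xy u hu).mono hsub).intervalIntegrable)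
    rw [← hftc]
    have := intervalIntegral.norm_integral_le_of_norm_le_const
      (C := M) (f := fun v => fxy u v) (a := y₀) (b := s)
      (fun v hv => by
        rw [Real.norm_eq_abs]
        exact hM u hu v (hsub (uIoc_subset_uIcc hv)))
    rw [Real.norm_eq_abs] at this
    exact this
  -- key two-point bound
  have key : ∀ t ∈ Icc a b, ∀ t' ∈ Icc a b, ∀ s ∈ Icc c d,
      |(f t s - f t y₀) - (f t' s - f t' y₀)| ≤ M * |s - y₀| * |t - t'| := by
    intro t ht t' ht' s hs
    have hmvt := Convex.norm_image_sub_le_of_norm_hasDerivWithin_le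
      (f := fun u => f u s - f u y₀) (f' := fun u => fx u s - fx u y₀)
      (C := M * |s - y₀|) (s := Icc a b)
      (fun u hu => (((hfx u hu s hs).sub (hfx u hu y₀ hy₀cd)).hasDerivWithinAt))
      (fun u hu => by rw [Real.norm_eq_abs]; exact hfxbound u hu s hs)
      (convex_Icc a b) ht' ht
    rw [Real.norm_eq_abs, Real.norm_eq_abs] at hmvt
    exact hmvt
  -- abbreviations
  set Iβ : ℝ := ((y₀ - β₁) ^ 2 + (β₂ - y₀) ^ 2) / 2 with hIβdef
  set Iα : ℝ := ((x₀ - α₁) ^ 2 + (α₂ - x₀) ^ 2) / 2 with hIαdef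
  have hIβ : ∫ s in β₁..β₂, |s - y₀| = Iβ := integral_abs_sub_mid_s9 hmidβ.1 hmidβ.2
  have hIα : ∫ t in α₁..α₂, |t - x₀| = Iα := integral_abs_sub_mid_s9 hmidα.1 hmidα.2
  have hIβ0 : 0 ≤ Iβ := by positivity
  have hIα0 : 0 ≤ Iα := by positivity
  set g : ℝ → ℝ → ℝ := fun t s => f t s - f t y₀ - f x₀ s + f x₀ y₀ with hgdef
  have hgbound : ∀ t ∈ Icc a b, ∀ s ∈ Icc c d, |g t s| ≤ M * |s - y₀| * |t - x₀| := by
    intro t ht s hs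
    have h1 := key t ht x₀ hx₀ab s hs
    have heq : g t s = (f t s - f t y₀) - (f x₀ s - f x₀ y₀) := by
      simp only [hgdef]; ring
    rw [heq]; exact h1
  have hgcont : ∀ t ∈ Icc a b, ContinuousOn (fun s => g t s) (Icc c d) := by
    intro t ht
    simp only [hgdef]
    exact (((hslice_s t ht).sub continuousOn_const).sub (hslice_s x₀ hx₀ab)).add
      continuousOn_const
  have huβ : uIcc β₁ β₂ ⊆ Icc c d := by rw [uIcc_of_le hβ.le]; exact hcd
  have huα : uIcc α₁ α₂ ⊆ Icc a b := by rw [uIcc_of_le hα.le]; exact hab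
  have hgint : ∀ t ∈ Icc a b, IntervalIntegrable (fun s => g t s) volume β₁ β₂ := by
    intro t ht
    exact ((hgcont t ht).mono huβ).intervalIntegrable
  have habsint : IntervalIntegrable (fun s : ℝ => |s - y₀|) volume β₁ β₂ :=
    (continuous_abs.comp (continuous_id.sub continuous_const)).intervalIntegrable _ _
  set F : ℝ → ℝ := fun t => ∫ s in β₁..β₂, g t s with hFdef
  have hFbound : ∀ t ∈ Icc a b, |F t| ≤ M * Iβ * |t - x₀| := by
    intro t ht
    have h1 : |F t| ≤ ∫ s in β₁..β₂, |g t s| := by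
      have := intervalIntegral.norm_integral_le_integral_norm (μ := volume)
        (f := fun s => g t s) (a := β₁) (b := β₂) hβ.le
      simpa [Real.norm_eq_abs] using this
    have h2 : (∫ s in β₁..β₂, |g t s|) ≤ ∫ s in β₁..β₂, (M * |t - x₀|) * |s - y₀| := by
      apply intervalIntegral.integral_mono_on hβ.le
      · exact (((hgcont t ht).mono huβ).abs).intervalIntegrable
      · exact habsint.const_mul _
      · intro s hs
        have := hgbound t ht s (hcd hs)
        calc |g t s| ≤ M * |s - y₀| * |t - x₀| := this
          _ = (M * |t - x₀|) * |s - y₀| := by ring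
    have h3 : (∫ s in β₁..β₂, (M * |t - x₀|) * |s - y₀|) = M * Iβ * |t - x₀| := by
      rw [intervalIntegral.integral_const_mul, hIβ]; ring
    linarith
  have hFlip : ∀ t ∈ Icc a b, ∀ t' ∈ Icc a b, |F t - F t'| ≤ M * Iβ * |t - t'| := by
    intro t ht t' ht'
    have hsub : F t - F t' = ∫ s in β₁..β₂, (g t s - g t' s) :=
      (intervalIntegral.integral_sub (hgint t ht) (hgint t' ht')).symm
    rw [hsub]
    have h1 : |∫ s in β₁..β₂, (g t s - g t' s)| ≤ ∫ s in β₁..β₂, |g t s - g t' s| := by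
      have := intervalIntegral.norm_integral_le_integral_norm (μ := volume)
        (f := fun s => g t s - g t' s) (a := β₁) (b := β₂) hβ.le
      simpa [Real.norm_eq_abs] using this
    have h2 : (∫ s in β₁..β₂, |g t s - g t' s|) ≤
        ∫ s in β₁..β₂, (M * |t - t'|) * |s - y₀| := by
      apply intervalIntegral.integral_mono_on hβ.le
      · exact ((((hgcont t ht).sub (hgcont t' ht')).mono huβ).abs).intervalIntegrable
      · exact habsint.const_mul _
      · intro s hs
        have hdiff : g t s - g t' s = (f t s - f t y₀) - (f t' s - f t' y₀) := by
          simp only [hgdef]; ring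
        rw [hdiff]
        calc |(f t s - f t y₀) - (f t' s - f t' y₀)| ≤ M * |s - y₀| * |t - t'| :=
              key t ht t' ht' s (hcd hs)
          _ = (M * |t - t'|) * |s - y₀| := by ring
    have h3 : (∫ s in β₁..β₂, (M * |t - t'|) * |s - y₀|) = M * Iβ * |t - t'| := by
      rw [intervalIntegral.integral_const_mul, hIβ]; ring
    linarith
  have hFcont : ContinuousOn F (Icc a b) := by
    have hK : LipschitzOnWith (Real.toNNReal (M * Iβ)) F (Icc a b) := by
      rw [lipschitzOnWith_iff_dist_le_mul]
      intro t ht t' ht'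
      rw [Real.dist_eq, Real.dist_eq]
      calc |F t - F t'| ≤ M * Iβ * |t - t'| := hFlip t ht t' ht'
        _ ≤ (Real.toNNReal (M * Iβ) : ℝ) * |t - t'| := by
            gcongr
            exact Real.le_coe_toNNReal _
    exact hK.continuousOn
  have hFint : IntervalIntegrable F volume α₁ α₂ := (hFcont.mono huα).intervalIntegrable
  -- F in terms of f-integrals
  have hI2int : IntervalIntegrable (fun s => f x₀ s) volume β₁ β₂ :=
    ((hslice_s x₀ hx₀ab).mono huβ).intervalIntegrable
  have hFt : ∀ t ∈ Icc a b, F t = (∫ s in β₁..β₂, f t s) - (β₂ - β₁) * f t y₀ -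
      (∫ s in β₁..β₂, f x₀ s) + (β₂ - β₁) * f x₀ y₀ := by
    intro t ht
    have i1 : IntervalIntegrable (fun s => f t s) volume β₁ β₂ :=
      ((hslice_s t ht).mono huβ).intervalIntegrable
    simp only [hFdef, hgdef]
    rw [intervalIntegral.integral_add ((i1.sub intervalIntegrable_const).sub hI2int)
        intervalIntegrable_const,
      intervalIntegral.integral_sub (i1.sub intervalIntegrable_const) hI2int,
      intervalIntegral.integral_sub i1 intervalIntegrable_const]
    simp only [intervalIntegral.integral_const, smul_eq_mul]
  have hI1int : IntervalIntegrable (fun t => f t y₀) volume α₁ α₂ :=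
    ((hslice_t y₀ hy₀cd).mono huα).intervalIntegrable
  have hJ : (∫ t in α₁..α₂, ∫ s in β₁..β₂, f t s) =
      (∫ t in α₁..α₂, F t) + (β₂ - β₁) * (∫ t in α₁..α₂, f t y₀) +
      (α₂ - α₁) * (∫ s in β₁..β₂, f x₀ s) - (α₂ - α₁) * (β₂ - β₁) * f x₀ y₀ := by
    have hcongr : EqOn (fun t => ∫ s in β₁..β₂, f t s)
        (fun t => F t + (β₂ - β₁) * f t y₀ +
          ((∫ s in β₁..β₂, f x₀ s) - (β₂ - β₁) * f x₀ y₀)) (uIcc α₁ α₂) := by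
      intro t ht
      have := hFt t (huα ht)
      simp only
      linarith
    rw [intervalIntegral.integral_congr hcongr,
      intervalIntegral.integral_add (hFint.add (hI1int.const_mul _)) intervalIntegrable_const,
      intervalIntegral.integral_add hFint (hI1int.const_mul _),
      intervalIntegral.integral_const_mul]
    simp only [intervalIntegral.integral_const, smul_eq_mul]
    ring
  -- main identity
  have hLHS : f x₀ y₀ - (1 / (α₂ - α₁)) * (∫ t in α₁..α₂, f t y₀) -
      (1 / (β₂ - β₁)) * (∫ s in β₁..β₂, f x₀ s) +
      (1 / ((α₂ - α₁) * (β₂ - β₁))) * (∫ t in α₁..α₂, ∫ s in β₁..β₂, f t s) =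
      (1 / ((α₂ - α₁) * (β₂ - β₁))) * ∫ t in α₁..α₂, F t := by
    rw [hJ]
    field_simp
    ring
  rw [hLHS]
  -- final bound
  have hFI : |∫ t in α₁..α₂, F t| ≤ M * Iβ * Iα := by
    have h1 : |∫ t in α₁..α₂, F t| ≤ ∫ t in α₁..α₂, |F t| := by
      have := intervalIntegral.norm_integral_le_integral_norm (μ := volume) (f := F)
        (a := α₁) (b := α₂) hα.le
      simpa [Real.norm_eq_abs] using this
    have h2 : (∫ t in α₁..α₂, |F t|) ≤ ∫ t in α₁..α₂, (M * Iβ) * |t - x₀| := by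
      apply intervalIntegral.integral_mono_on hα.le
      · exact ((hFcont.mono huα).abs).intervalIntegrable
      · exact ((continuous_abs.comp
          (continuous_id.sub continuous_const)).intervalIntegrable _ _).const_mul _
      · intro t ht
        have := hFbound t (hab ht)
        linarith
    have h3 : (∫ t in α₁..α₂, (M * Iβ) * |t - x₀|) = M * Iβ * Iα := by
      rw [intervalIntegral.integral_const_mul, hIα]
    linarith
  have hA : (a + b - 2 * α₁) ^ 2 + (a + b - 2 * α₂) ^ 2 = 8 * Iα := by
    rw [hIαdef, hx₀def]; ring
  have hB : (c + d - 2 * β₁) ^ 2 + (c + d - 2 * β₂) ^ 2 = 8 * Iβ := by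
    rw [hIβdef, hy₀def]; ring
  rw [abs_mul]
  have hpos : 0 < (α₂ - α₁) * (β₂ - β₁) := mul_pos hΔα hΔβ
  have hcoef : |1 / ((α₂ - α₁) * (β₂ - β₁))| = 1 / ((α₂ - α₁) * (β₂ - β₁)) :=
    abs_of_pos (by positivity)
  rw [hcoef, hA, hB]
  calc (1 / ((α₂ - α₁) * (β₂ - β₁))) * |∫ t in α₁..α₂, F t|
      ≤ (1 / ((α₂ - α₁) * (β₂ - β₁))) * (M * Iβ * Iα) :=
        mul_le_mul_of_nonneg_left hFI (by positivity)
    _ = 8 * Iα * (8 * Iβ) * M / (64 * (α₂ - α₁) * (β₂ - β₁)) := by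
        field_simp
        ring
end
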